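/- arXiv:2502.13309 — 10 statements merged into one kernel-verified Lean document; each statement's English description precedes it below -/
import Mathlib

section
/- The number of non-nesting permutations of {1,1,2,2,...,n,n} equals n! times the n-th Catalan number C_n. -/
/-- A permutation of the multiset {1,1,2,2,...,n,n}, encoded as a function
`Fin (2*n) → Fin n` where the value `v : Fin n` represents `v+1`:
every value appears exactly twice. -/
def IsMultisetPerm {n : ℕ} (π : Fin (2*n) → Fin n) : Prop :=
  ∀ v : Fin n, (Finset.univ.filter fun i => π i = v).card = 2

/-- Non-nesting: no indices i<j<k<l with π_i=π_l, π_j=π_k, π_i≠π_j. -/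
def NonNesting {n : ℕ} (π : Fin (2*n) → Fin n) : Prop :=
  ¬ ∃ i j k l : Fin (2*n), i < j ∧ j < k ∧ k < l ∧
      π i = π l ∧ π j = π k ∧ π i ≠ π j

/-- Non-crossing: no indices i<j<k<l with π_i=π_k, π_j=π_l, π_i≠π_j. -/
def NonCrossing {n : ℕ} (π : Fin (2*n) → Fin n) : Prop :=
  ¬ ∃ i j k l : Fin (2*n), i < j ∧ j < k ∧ k < l ∧
      π i = π k ∧ π j = π l ∧ π i ≠ π j

/-- Avoiding the pattern 231: no i<j<k with π_k < π_i < π_j. -/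
def Avoids231 {n : ℕ} (π : Fin (2*n) → Fin n) : Prop :=
  ¬ ∃ i j k : Fin (2*n), i < j ∧ j < k ∧ π k < π i ∧ π i < π j

/-- Avoiding 122: no i<j<k with π_i < π_j = π_k. -/
def Avoids122 {n : ℕ} (π : Fin (2*n) → Fin n) : Prop :=
  ¬ ∃ i j k : Fin (2*n), i < j ∧ j < k ∧ π i < π j ∧ π j = π k

/-- The first entry is the value 1 (encoded as `0 : Fin n`). -/
def FirstIsOne {n : ℕ} (π : Fin (2*n) → Fin n) : Prop :=
  ∃ h : 0 < n, π ⟨0, by omega⟩ = ⟨0, h⟩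

/-- The last entry is the value n (encoded as `n-1 : Fin n`). -/
def LastIsMax {n : ℕ} (π : Fin (2*n) → Fin n) : Prop :=
  ∃ h : 0 < n, π ⟨2*n - 1, by omega⟩ = ⟨n - 1, by omega⟩

/-!
For a permutation of `{1,1,…,n,n}` let `O` be the set of positions of first occurrences and `σ`
the order in which the values first occur. Match the `a`-th position of `O` with the `a`-th
position outside `O`. The permutation is non-nesting exactly when matched positions carry the same
value (first in, first out); then every position of `O` precedes its partner, which is the ballot
condition making `O` the set of up steps of a Dyck path. Conversely every pair `(σ, O)` of this
kind labels exactly one non-nesting permutation, so there are `n! · C_n` of them.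
-/

open Finset

namespace Finset

variable {α : Type*} [LinearOrder α] {s t : Finset α} {k : ℕ}

lemma card_filter_eq_card_filter_orderEmbOfFin (h : #s = k) (p : α → Prop) [DecidablePred p] :
    #{x ∈ s | p x} = #{a : Fin k | p (s.orderEmbOfFin h a)} := by
  conv_lhs => rw [← s.image_orderEmbOfFin_univ h]
  rw [filter_image, card_image_of_injective _ (s.orderEmbOfFin h).injective]

lemma orderEmbOfFin_le_of_forall_card_filter_lt_le (hs : #s = k) (ht : #t = k)
    (h : ∀ y, #{x ∈ t | x < y} ≤ #{x ∈ s | x < y}) (a : Fin k) :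
    s.orderEmbOfFin hs a ≤ t.orderEmbOfFin ht a := by
  by_contra! hlt
  have hcard := h (s.orderEmbOfFin hs a)
  rw [card_filter_eq_card_filter_orderEmbOfFin hs,
    card_filter_eq_card_filter_orderEmbOfFin ht] at hcard
  simp only [OrderEmbedding.lt_iff_lt, filter_gt_eq_Iio, Fin.card_Iio] at hcard
  have hIic : Iic a ⊆ ({b | t.orderEmbOfFin ht b < s.orderEmbOfFin hs a} : Finset (Fin k)) :=
    fun b hb => by simpa using ((t.orderEmbOfFin ht).monotone (mem_Iic.mp hb)).trans_lt hlt
  have := (card_le_card hIic).trans hcard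
  rw [Fin.card_Iic] at this
  omega

lemma card_filter_le_card_filter_of_orderEmbOfFin_le (hs : #s = k) (ht : #t = k)
    (h : ∀ a, s.orderEmbOfFin hs a ≤ t.orderEmbOfFin ht a) {p : α → Prop} [DecidablePred p]
    (hp : Antitone p) : #{x ∈ t | p x} ≤ #{x ∈ s | p x} := by
  rw [card_filter_eq_card_filter_orderEmbOfFin hs, card_filter_eq_card_filter_orderEmbOfFin ht]
  exact card_le_card fun a ha => by
    simp only [mem_filter, mem_univ, true_and] at ha ⊢
    exact hp (h a) ha

end Finset

lemma List.count_take_ofFn {α : Type*} [DecidableEq α] {m : ℕ} (f : Fin m → α)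
    (a : α) (k : ℕ) : ((List.ofFn f).take k).count a = #{i : Fin m | (i : ℕ) < k ∧ f i = a} := by
  induction m generalizing k with
  | zero => simp
  | succ m ih =>
    cases k with
    | zero => simp
    | succ k =>
      rw [List.ofFn_succ, List.take_succ_cons, List.count_cons, ih, Fin.card_filter_univ_succ']
      simp [add_comm]

section Openers

variable {n : ℕ} {O : Finset (Fin (2*n))}

lemma card_compl_of_card_eq (hO : #O = n) : #Oᶜ = n := by
  rw [card_compl, Fintype.card_fin, hO]
  omega

def opener (hO : #O = n) : Fin n ↪o Fin (2*n) := O.orderEmbOfFin hO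

def closer (hO : #O = n) : Fin n ↪o Fin (2*n) := Oᶜ.orderEmbOfFin (card_compl_of_card_eq hO)

variable (hO : #O = n)

lemma opener_mem (a : Fin n) : opener hO a ∈ O := orderEmbOfFin_mem ..

lemma closer_notMem (a : Fin n) : closer hO a ∉ O := mem_compl.mp (orderEmbOfFin_mem ..)

lemma opener_ne_closer (a b : Fin n) : opener hO a ≠ closer hO b :=
  fun h => closer_notMem hO b (h ▸ opener_mem hO a)

lemma exists_opener_eq_or_closer_eq (i : Fin (2*n)) :
    (∃ a, opener hO a = i) ∨ ∃ a, closer hO a = i := by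
  by_cases hi : i ∈ O
  · left
    rwa [← mem_coe, ← range_orderEmbOfFin O hO] at hi
  · right
    rwa [← mem_compl, ← mem_coe, ← range_orderEmbOfFin Oᶜ (card_compl_of_card_eq hO)] at hi

lemma forall_opener_lt_closer_iff :
    (∀ a, opener hO a < closer hO a) ↔
      ∀ k : ℕ, #{i ∈ Oᶜ | i.val < k} ≤ #{i ∈ O | i.val < k} := by
  refine ⟨fun h k => ?_, fun h a => ?_⟩
  · exact card_filter_le_card_filter_of_orderEmbOfFin_le _ _ (fun a => (h a).le)
      fun i j hij hj => lt_of_le_of_lt hij hj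
  · refine lt_of_le_of_ne ?_ (opener_ne_closer hO a a)
    exact orderEmbOfFin_le_of_forall_card_filter_lt_le _ _ (fun y => by simpa using h y) a

end Openers

def firstOccurrences {m : ℕ} {β : Type*} [DecidableEq β] (f : Fin m → β) : Finset (Fin m) :=
  {i | ∀ j < i, f j ≠ f i}

section Label

variable {n : ℕ} {O : Finset (Fin (2*n))} (σ : Equiv.Perm (Fin n)) (hO : #O = n)

def label (i : Fin (2*n)) : Fin n :=
  σ <| if h : i ∈ O then (O.orderIsoOfFin hO).symm ⟨i, h⟩
    else (Oᶜ.orderIsoOfFin (card_compl_of_card_eq hO)).symm ⟨i, mem_compl.mpr h⟩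

@[simp]
lemma label_opener (a : Fin n) : label σ hO (opener hO a) = σ a := by
  rw [label, dif_pos (opener_mem hO a)]
  congr
  rw [OrderIso.symm_apply_eq]
  exact Subtype.ext (coe_orderIsoOfFin_apply ..).symm

@[simp]
lemma label_closer (a : Fin n) : label σ hO (closer hO a) = σ a := by
  rw [label, dif_neg (closer_notMem hO a)]
  congr
  rw [OrderIso.symm_apply_eq]
  exact Subtype.ext (coe_orderIsoOfFin_apply ..).symm

lemma label_eq_iff (i : Fin (2*n)) (a : Fin n) :
    label σ hO i = σ a ↔ i = opener hO a ∨ i = closer hO a := by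
  rcases exists_opener_eq_or_closer_eq hO i with ⟨b, rfl⟩ | ⟨b, rfl⟩ <;>
    simp [opener_ne_closer, (opener_ne_closer hO _ _).symm]

lemma isMultisetPerm_label : IsMultisetPerm (label σ hO) := by
  intro v
  obtain ⟨a, rfl⟩ := σ.surjective v
  have hfiber : ({i | label σ hO i = σ a} : Finset _) = {opener hO a, closer hO a} := by
    ext i
    simp [label_eq_iff]
  rw [hfiber, card_pair (opener_ne_closer hO a a)]

variable {hO}

lemma exists_eq_opener_and_eq_closer_of_label_eq (hlt : ∀ a, opener hO a < closer hO a)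
    {i l : Fin (2*n)} (hil : i < l)
    (h : label σ hO i = label σ hO l) : ∃ a, i = opener hO a ∧ l = closer hO a := by
  obtain ⟨a, ha⟩ := σ.surjective (label σ hO i)
  rcases (label_eq_iff σ hO i a).mp ha.symm with rfl | rfl <;>
    rcases (label_eq_iff σ hO l a).mp (h ▸ ha.symm) with rfl | rfl
  · exact absurd hil (lt_irrefl _)
  · exact ⟨a, rfl, rfl⟩
  · exact absurd hil (hlt a).not_gt
  · exact absurd hil (lt_irrefl _)

lemma nonNesting_label (hlt : ∀ a, opener hO a < closer hO a) : NonNesting (label σ hO) := by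
  rintro ⟨i, j, k, l, hij, hjk, hkl, hil, hjk', -⟩
  obtain ⟨a, rfl, rfl⟩ :=
    exists_eq_opener_and_eq_closer_of_label_eq σ hlt (hij.trans (hjk.trans hkl)) hil
  obtain ⟨b, rfl, rfl⟩ := exists_eq_opener_and_eq_closer_of_label_eq σ hlt hjk hjk'
  exact lt_asymm ((opener hO).lt_iff_lt.mp hij) ((closer hO).lt_iff_lt.mp hkl)

lemma firstOccurrences_label (hlt : ∀ a, opener hO a < closer hO a) :
    firstOccurrences (label σ hO) = O := by
  ext i
  rcases exists_opener_eq_or_closer_eq hO i with ⟨a, rfl⟩ | ⟨a, rfl⟩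
  · simp only [firstOccurrences, mem_filter, mem_univ, true_and, opener_mem, iff_true]
    intro j hj hja
    rcases (label_eq_iff σ hO j a).mp (hja.trans (label_opener σ hO a)) with rfl | rfl
    · exact lt_irrefl _ hj
    · exact lt_asymm hj (hlt a)
  · simp only [firstOccurrences, mem_filter, mem_univ, true_and, closer_notMem, iff_false,
      not_forall, not_not]
    exact ⟨opener hO a, hlt a, by simp⟩

end Label

section Occurrences

variable {n : ℕ} {π : Fin (2*n) → Fin n}

lemma IsMultisetPerm.fiber_nonempty (hπ : IsMultisetPerm π) (v : Fin n) :
    ({i | π i = v} : Finset _).Nonempty :=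
  card_pos.mp (by rw [hπ v]; norm_num)

def firstOcc (hπ : IsMultisetPerm π) (v : Fin n) : Fin (2*n) :=
  ({i | π i = v} : Finset _).min' (hπ.fiber_nonempty v)

def secondOcc (hπ : IsMultisetPerm π) (v : Fin n) : Fin (2*n) :=
  ({i | π i = v} : Finset _).max' (hπ.fiber_nonempty v)

lemma apply_firstOcc (hπ : IsMultisetPerm π) (v : Fin n) : π (firstOcc hπ v) = v := by
  simpa [firstOcc] using min'_mem _ (hπ.fiber_nonempty v)

lemma apply_secondOcc (hπ : IsMultisetPerm π) (v : Fin n) : π (secondOcc hπ v) = v := by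
  simpa [secondOcc] using max'_mem _ (hπ.fiber_nonempty v)

lemma firstOcc_lt_secondOcc (hπ : IsMultisetPerm π) (v : Fin n) :
    firstOcc hπ v < secondOcc hπ v :=
  min'_lt_max'_of_card _ (by rw [hπ v]; norm_num)

lemma eq_firstOcc_or_eq_secondOcc (hπ : IsMultisetPerm π) (i : Fin (2*n)) :
    i = firstOcc hπ (π i) ∨ i = secondOcc hπ (π i) := by
  have hsub : {firstOcc hπ (π i), secondOcc hπ (π i)} ⊆ ({j | π j = π i} : Finset _) := by
    simp [insert_subset_iff, apply_firstOcc, apply_secondOcc]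
  have hfiber := eq_of_subset_of_card_le hsub
    (by rw [hπ, card_pair (firstOcc_lt_secondOcc hπ _).ne])
  simpa using hfiber.ge (show i ∈ ({j | π j = π i} : Finset _) by simp)

lemma mem_firstOccurrences_iff (hπ : IsMultisetPerm π) {i : Fin (2*n)} :
    i ∈ firstOccurrences π ↔ i = firstOcc hπ (π i) := by
  simp only [firstOccurrences, mem_filter, mem_univ, true_and]
  refine ⟨fun h => (eq_firstOcc_or_eq_secondOcc hπ i).resolve_right fun hi => ?_,
    fun h j hj hji => ?_⟩
  · exact h _ ((firstOcc_lt_secondOcc hπ (π i)).trans_eq hi.symm) (apply_firstOcc hπ _)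
  · exact (h ▸ hj).not_ge (min'_le _ j (by simpa using hji))

lemma card_firstOccurrences (hπ : IsMultisetPerm π) : #(firstOccurrences π) = n := by
  have : firstOccurrences π = univ.image (firstOcc hπ) := by
    ext i
    simp only [mem_firstOccurrences_iff hπ, mem_image, mem_univ, true_and]
    exact ⟨fun h => ⟨π i, h.symm⟩, by rintro ⟨v, rfl⟩; rw [apply_firstOcc hπ]⟩
  rw [this, card_image_of_injective _ (Function.LeftInverse.injective (apply_firstOcc hπ)),
    card_univ, Fintype.card_fin]

end Occurrences

section NonNesting

variable {n : ℕ} {π : Fin (2*n) → Fin n} (hπ : IsMultisetPerm π)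

lemma secondOcc_lt_secondOcc (hnn : NonNesting π) {u v : Fin n}
    (h : firstOcc hπ u < firstOcc hπ v) : secondOcc hπ u < secondOcc hπ v := by
  have huv : u ≠ v := by
    rintro rfl
    exact lt_irrefl _ h
  refine lt_of_le_of_ne (not_lt.mp fun hvu => hnn ?_) fun heq => huv ?_
  · exact ⟨firstOcc hπ u, firstOcc hπ v, secondOcc hπ v, secondOcc hπ u, h,
      firstOcc_lt_secondOcc hπ v, hvu, by rw [apply_firstOcc hπ, apply_secondOcc hπ],
      by rw [apply_firstOcc hπ, apply_secondOcc hπ],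
      by rwa [apply_firstOcc hπ, apply_firstOcc hπ]⟩
  · simpa only [apply_secondOcc hπ] using congrArg π heq

lemma injective_apply_opener_firstOccurrences :
    Function.Injective fun a => π (opener (card_firstOccurrences hπ) a) := by
  intro a b hab
  set hO := card_firstOccurrences hπ
  have h a := (mem_firstOccurrences_iff hπ).mp (opener_mem hO a)
  refine (opener hO).injective ?_
  calc opener hO a = firstOcc hπ (π (opener hO a)) := h a
    _ = firstOcc hπ (π (opener hO b)) := congrArg _ hab
    _ = opener hO b := (h b).symm

noncomputable def firstOccOrder : Equiv.Perm (Fin n) :=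
  .ofBijective _ (Finite.injective_iff_bijective.mp (injective_apply_opener_firstOccurrences hπ))

lemma firstOcc_firstOccOrder (a : Fin n) :
    firstOcc hπ (firstOccOrder hπ a) = opener (card_firstOccurrences hπ) a :=
  ((mem_firstOccurrences_iff hπ).mp (opener_mem _ a)).symm

lemma closer_firstOccurrences (hnn : NonNesting π) (a : Fin n) :
    closer (card_firstOccurrences hπ) a = secondOcc hπ (firstOccOrder hπ a) := by
  have hmem a : secondOcc hπ (firstOccOrder hπ a) ∈ (firstOccurrences π)ᶜ := by
    rw [mem_compl, mem_firstOccurrences_iff hπ, apply_secondOcc hπ]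
    exact (firstOcc_lt_secondOcc hπ _).ne'
  have hmono : StrictMono fun a => secondOcc hπ (firstOccOrder hπ a) := fun a b hab =>
    secondOcc_lt_secondOcc hπ hnn (by
      rw [firstOcc_firstOccOrder, firstOcc_firstOccOrder]
      exact (opener _).strictMono hab)
  exact (congrFun (orderEmbOfFin_unique _ hmem hmono) a).symm

lemma opener_lt_closer_firstOccurrences (hnn : NonNesting π) (a : Fin n) :
    opener (card_firstOccurrences hπ) a < closer (card_firstOccurrences hπ) a := by
  rw [closer_firstOccurrences hπ hnn, ← firstOcc_firstOccOrder hπ]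
  exact firstOcc_lt_secondOcc hπ _

lemma label_firstOccOrder (hnn : NonNesting π) :
    label (firstOccOrder hπ) (card_firstOccurrences hπ) = π := by
  funext i
  obtain ⟨a, rfl⟩ | ⟨a, rfl⟩ := exists_opener_eq_or_closer_eq (card_firstOccurrences hπ) i
  · rw [label_opener]
    rfl
  · rw [label_closer, closer_firstOccurrences hπ hnn, apply_secondOcc hπ]

end NonNesting

open DyckStep in
def Finset.toDyckSteps {m : ℕ} (O : Finset (Fin m)) : List DyckStep :=
  List.ofFn fun i => if i ∈ O then U else D

section DyckSteps

variable {m : ℕ} (O : Finset (Fin m))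

lemma count_U_take_toDyckSteps (k : ℕ) :
    (O.toDyckSteps.take k).count .U = #{i ∈ O | i.val < k} := by
  rw [toDyckSteps, List.count_take_ofFn]
  congr 1
  ext i
  simp [and_comm]

lemma count_D_take_toDyckSteps (k : ℕ) :
    (O.toDyckSteps.take k).count .D = #{i ∈ Oᶜ | i.val < k} := by
  rw [toDyckSteps, List.count_take_ofFn]
  congr 1
  ext i
  simp [and_comm]

lemma take_length_toDyckSteps : O.toDyckSteps.take m = O.toDyckSteps :=
  List.take_of_length_le (by simp [toDyckSteps])

lemma count_U_toDyckSteps : O.toDyckSteps.count .U = #O := by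
  rw [← take_length_toDyckSteps, count_U_take_toDyckSteps, filter_true_of_mem fun i _ => i.2]

lemma count_D_toDyckSteps : O.toDyckSteps.count .D = #Oᶜ := by
  rw [← take_length_toDyckSteps, count_D_take_toDyckSteps, filter_true_of_mem fun i _ => i.2]

end DyckSteps

@[ext]
structure DyckOpeners (n : ℕ) where
  openers : Finset (Fin (2*n))
  card_openers : #openers = n
  opener_lt_closer : ∀ a, opener card_openers a < closer card_openers a

namespace DyckOpeners

variable {n : ℕ}

def labelling (x : Equiv.Perm (Fin n) × DyckOpeners n) :
    {π : Fin (2*n) → Fin n // IsMultisetPerm π ∧ NonNesting π} :=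
  ⟨label x.1 x.2.card_openers, isMultisetPerm_label _ _,
    nonNesting_label _ x.2.opener_lt_closer⟩

lemma labelling_bijective : Function.Bijective (labelling (n := n)) := by
  refine ⟨?_, fun π => ?_⟩
  · rintro ⟨σ, P⟩ ⟨σ', P'⟩ h
    have hlabel : label σ P.card_openers = label σ' P'.card_openers := congrArg Subtype.val h
    obtain rfl : P = P' := DyckOpeners.ext <| by
      rw [← firstOccurrences_label σ P.opener_lt_closer, hlabel,
        firstOccurrences_label σ' P'.opener_lt_closer]
    refine Prod.ext (Equiv.ext fun a => ?_) rfl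
    simpa using congrFun hlabel (opener P.card_openers a)
  · obtain ⟨π, hπ, hnn⟩ := π
    exact ⟨(firstOccOrder hπ,
      ⟨_, card_firstOccurrences hπ, opener_lt_closer_firstOccurrences hπ hnn⟩),
      Subtype.ext (label_firstOccOrder hπ hnn)⟩

def toDyckWord (P : DyckOpeners n) : DyckWord where
  toList := P.openers.toDyckSteps
  count_U_eq_count_D := by
    rw [count_U_toDyckSteps, count_D_toDyckSteps, P.card_openers,
      card_compl_of_card_eq P.card_openers]
  count_D_le_count_U k := by
    rw [count_U_take_toDyckSteps, count_D_take_toDyckSteps]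
    exact (forall_opener_lt_closer_iff P.card_openers).mp P.opener_lt_closer k

lemma semilength_toDyckWord (P : DyckOpeners n) : P.toDyckWord.semilength = n :=
  (count_U_toDyckSteps _).trans P.card_openers

lemma toDyckWord_injective : Function.Injective (toDyckWord (n := n)) := by
  intro P P' h
  ext i
  have := congrFun (List.ofFn_injective (congrArg DyckWord.toList h)) i
  by_cases hi : i ∈ P.openers <;> by_cases hi' : i ∈ P'.openers <;> simp_all

open DyckStep in
lemma exists_toDyckWord_eq (p : DyckWord) (hp : p.semilength = n) :
    ∃ P : DyckOpeners n, P.toDyckWord = p := by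
  have hl : p.toList.length = 2*n := by rw [← p.two_mul_semilength_eq_length, hp]
  set O : Finset (Fin (2*n)) := {i | p.toList[i.val] = U}
  have hsteps : O.toDyckSteps = p.toList := by
    refine List.ext_getElem (by simp [toDyckSteps, hl]) fun j _ _ => ?_
    cases h : p.toList[j] <;> simp [toDyckSteps, O, h]
  have hO : #O = n := by rw [← count_U_toDyckSteps, hsteps]; exact hp
  refine ⟨⟨O, hO, (forall_opener_lt_closer_iff hO).mpr fun k => ?_⟩, DyckWord.ext hsteps⟩
  rw [← count_U_take_toDyckSteps O, ← count_D_take_toDyckSteps O, hsteps]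
  exact p.count_D_le_count_U k

noncomputable def equivDyckWord : DyckOpeners n ≃ {p : DyckWord // p.semilength = n} :=
  .ofBijective (fun P => ⟨P.toDyckWord, P.semilength_toDyckWord⟩)
    ⟨fun _ _ h => toDyckWord_injective (congrArg Subtype.val h),
      fun p => (exists_toDyckWord_eq p.1 p.2).imp fun _ hP => Subtype.ext hP⟩

end DyckOpeners

theorem stmt2 (n : ℕ) :
    Nat.card {π : Fin (2*n) → Fin n // IsMultisetPerm π ∧ NonNesting π} =
      n.factorial * (Nat.choose (2*n) n / (n+1)) := by
  rw [← Nat.card_congr (Equiv.ofBijective _ DyckOpeners.labelling_bijective), Nat.card_prod,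
    Nat.card_perm, Nat.card_fin, Nat.card_congr DyckOpeners.equivDyckWord, Nat.card_eq_fintype_card,
    DyckWord.card_dyckWord_semilength_eq_catalan, catalan_eq_centralBinom_div,
    Nat.centralBinom_eq_two_mul_choose]
end

section
/- Let π be a non-nesting permutation of {1,1,...,n,n} avoiding the pattern 231 (no indices i<j<k with π_k < π_i < π_j), and let i<j be the two positions with π_i = π_j = n. Then at most one value a < n has both of its occurrences straddling the left endpoint (first occurrence before position i and second occurrence strictly between i and j), and at most one value a < n has its first occurrence strictly between i and j and its second occurrence after position j. -/
theorem stmt3 {n : ℕ} (hn : 0 < n) (π : Fin (2*n) → Fin n)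
    (hperm : IsMultisetPerm π) (hnest : NonNesting π) (hav : Avoids231 π)
    (i j : Fin (2*n)) (hij : i < j)
    (hi : (π i : ℕ) = n - 1) (hj : (π j : ℕ) = n - 1) :
    (∀ a b : Fin n, (a : ℕ) + 1 < n → (b : ℕ) + 1 < n →
      (∃ k1 k2 : Fin (2*n), k1 < i ∧ i < k2 ∧ k2 < j ∧ π k1 = a ∧ π k2 = a) →
      (∃ k1 k2 : Fin (2*n), k1 < i ∧ i < k2 ∧ k2 < j ∧ π k1 = b ∧ π k2 = b) →
      a = b) ∧
    (∀ a b : Fin n, (a : ℕ) + 1 < n → (b : ℕ) + 1 < n →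
      (∃ k1 k2 : Fin (2*n), i < k1 ∧ k1 < j ∧ j < k2 ∧ π k1 = a ∧ π k2 = a) →
      (∃ k1 k2 : Fin (2*n), i < k1 ∧ k1 < j ∧ j < k2 ∧ π k1 = b ∧ π k2 = b) →
      a = b) := by
  have key : ∀ (p : Fin (2*n)), (π p : ℕ) = n - 1 →
      ∀ a b : Fin n, a < b → (b : ℕ) + 1 < n →
      ∀ q r : Fin (2*n), q < p → p < r → π q = b → π r = a → False := by
    intro p hp a b hab hb q r hq hr hq' hr'
    apply hav
    refine ⟨q, p, r, hq, hr, ?_, ?_⟩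
    · rw [hq', hr']; exact hab
    · rw [hq']
      have : (b : ℕ) < (π p : ℕ) := by omega
      exact this
  constructor
  · rintro a b ha hb ⟨a1, a2, ha1, hia2, ha2j, hpa1, hpa2⟩
      ⟨b1, b2, hb1, hib2, hb2j, hpb1, hpb2⟩
    rcases lt_trichotomy a b with h | h | h
    · exact absurd (key i hi a b h hb b1 a2 hb1 hia2 hpb1 hpa2) (fun x => x)
    · exact h
    · exact absurd (key i hi b a h ha a1 b2 ha1 hib2 hpa1 hpb2) (fun x => x)
  · rintro a b ha hb ⟨a1, a2, hia1, ha1j, hja2, hpa1, hpa2⟩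
      ⟨b1, b2, hib1, hb1j, hjb2, hpb1, hpb2⟩
    rcases lt_trichotomy a b with h | h | h
    · exact absurd (key j hj a b h hb b1 a2 hb1j hja2 hpb1 hpa2) (fun x => x)
    · exact h
    · exact absurd (key j hj b a h ha a1 b2 ha1j hjb2 hpa1 hpb2) (fun x => x)
end

section
/- Let π be a non-nesting 231-avoiding permutation of {1,1,...,n,n} with π_i = π_j = n for i<j. If a value a has one occurrence at position k1 < i and the other at position k2 with i < k2 < j, then a is the maximum of all values π_m with m < i. If a value a has one occurrence at position k1 with i < k1 < j and the other at position k2 > j, then a is the minimum of all values π_m with m > j. -/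
lemma three_occ {n : ℕ} {π : Fin (2*n) → Fin n} (h : IsMultisetPerm π)
    {x y z : Fin (2*n)} (hxy : x ≠ y) (hyz : y ≠ z) (hxz : x ≠ z)
    (e1 : π x = π y) (e2 : π y = π z) : False := by
  have h2 := h (π x)
  have hsub : ({x, y, z} : Finset _) ⊆ Finset.univ.filter fun i => π i = π x := by
    intro t ht
    simp only [Finset.mem_insert, Finset.mem_singleton] at ht
    simp only [Finset.mem_filter, Finset.mem_univ, true_and]
    rcases ht with rfl | rfl | rfl
    · rfl
    · exact e1.symm
    · exact (e1.trans e2).symm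
  have hc : ({x, y, z} : Finset _).card = 3 := by
    rw [Finset.card_insert_of_notMem (by simp [hxy, hxz]),
        Finset.card_insert_of_notMem (by simp [hyz])]
    simp
  have := Finset.card_le_card hsub
  omega

theorem stmt4 {n : ℕ} (hn : 0 < n) (π : Fin (2*n) → Fin n)
    (hperm : IsMultisetPerm π) (hnest : NonNesting π) (hav : Avoids231 π)
    (i j : Fin (2*n)) (hij : i < j)
    (hi : (π i : ℕ) = n - 1) (hj : (π j : ℕ) = n - 1) :
    (∀ (a : Fin n) (k1 k2 : Fin (2*n)), k1 < i → i < k2 → k2 < j →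
      π k1 = a → π k2 = a → ∀ m : Fin (2*n), m < i → π m ≤ a) ∧
    (∀ (a : Fin n) (k1 k2 : Fin (2*n)), i < k1 → k1 < j → j < k2 →
      π k1 = a → π k2 = a → ∀ m : Fin (2*n), j < m → a ≤ π m) := by
  have hiej : π i = π j := Fin.ext (hi.trans hj.symm)
  constructor
  · intro a k1 k2 hk1 hik2 hk2j h1 h2 m hm
    by_contra hlt
    push_neg at hlt
    have hne : π m ≠ π i := fun he =>
      three_occ hperm (ne_of_lt hm) (ne_of_lt hij) (ne_of_lt (hm.trans hij)) he hiej
    have hmi : π m < π i := lt_of_le_of_ne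
      (Fin.le_def.mpr (by have := (π m).isLt; omega)) hne
    exact hav ⟨m, i, k2, hm, hik2, by rw [h2]; exact hlt, hmi⟩
  · intro a k1 k2 hik1 hk1j hjk2 h1 h2 m hm
    by_contra hlt
    push_neg at hlt
    have hne : a ≠ π j := fun he =>
      three_occ hperm (ne_of_lt hik1) (ne_of_lt hk1j) (ne_of_lt (hik1.trans hk1j))
        (hiej.trans (he ▸ h1.symm)) (h1.trans he)
    have haj : a < π j := lt_of_le_of_ne
      (Fin.le_def.mpr (by have := a.isLt; omega)) hne
    exact hav ⟨k1, j, m, hk1j, hm, by rw [h1]; exact hlt, by rw [h1]; exact haj⟩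
end

section
/- For all n ≥ 1, the number of non-crossing permutations of {1,1,...,n,n} that avoid the pattern 122 (no indices i<j<k with π_i < π_j = π_k) equals the n-th Catalan number C_n = binom(2n,n)/(n+1). -/
open DyckStep

namespace List

variable {α : Type*}

def NonCrossing (l : List α) : Prop := ∀ a b, a ≠ b → ¬ [a, b, a, b] <+ l

def Avoids122 [LT α] (l : List α) : Prop := ∀ a b, a < b → ¬ [a, b, b] <+ l

lemma sublist_ofFn_iff {m : ℕ} {q : List α} {f : Fin m → α} :
    q <+ ofFn f ↔ ∃ e : Fin q.length → Fin m, StrictMono e ∧ ∀ i, q[i] = f (e i) := by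
  rw [sublist_iff_exists_fin_orderEmbedding_get_eq]
  constructor
  · rintro ⟨e, he⟩
    exact ⟨Fin.cast length_ofFn ∘ e, fun i j hij => by simpa using e.strictMono hij,
      fun i => (he i).trans (get_ofFn f (e i))⟩
  · rintro ⟨e, hmono, he⟩
    exact ⟨OrderEmbedding.ofStrictMono (Fin.cast length_ofFn.symm ∘ e)
      fun i j hij => by simpa using hmono hij,
      fun i => (he i).trans (get_ofFn f (Fin.cast length_ofFn.symm (e i))).symm⟩

lemma count_U_add_count_D (w : List DyckStep) : w.count U + w.count D = w.length := by
  induction w with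
  | nil => rfl
  | cons s w ih => cases s <;> simp <;> omega

section occurrenceWord
variable [DecidableEq α]

def occurrenceWord : List α → List DyckStep
  | [] => []
  | a :: l => (if a ∈ l then U else D) :: occurrenceWord l

@[simp] lemma length_occurrenceWord (l : List α) : l.occurrenceWord.length = l.length := by
  induction l <;> simp_all [occurrenceWord]

lemma drop_occurrenceWord (l : List α) (i : ℕ) :
    l.occurrenceWord.drop i = (l.drop i).occurrenceWord := by
  induction l generalizing i with
  | nil => simp [occurrenceWord]
  | cons a l ih => cases i <;> simp [occurrenceWord, ih]

lemma occurrenceWord_append {l₁ l₂ : List α} (h : Disjoint l₁ l₂) :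
    (l₁ ++ l₂).occurrenceWord = l₁.occurrenceWord ++ l₂.occurrenceWord := by
  induction l₁ with
  | nil => rfl
  | cons a l₁ ih =>
    obtain ⟨ha, h⟩ := disjoint_cons_left.mp h
    simp [occurrenceWord, ha, ih h]

lemma count_D_occurrenceWord (l : List α) : l.occurrenceWord.count D = l.dedup.length := by
  induction l with
  | nil => rfl
  | cons a l ih => by_cases ha : a ∈ l <;> simp [occurrenceWord, ha, ih, dedup_cons_of_mem,
    dedup_cons_of_notMem]

lemma length_le_mul_length_dedup {l : List α} {k : ℕ} (h : ∀ a, l.count a ≤ k) :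
    l.length ≤ k * l.dedup.length := by
  rw [← sum_map_count_dedup_eq_length, mul_comm, ← smul_eq_mul, ← length_map (f := (l.count ·))]
  exact sum_le_card_nsmul _ _ (by simp [h])

lemma length_eq_mul_length_dedup {l : List α} {k : ℕ} (h : ∀ a ∈ l, l.count a = k) :
    l.length = k * l.dedup.length := by
  rw [← sum_map_count_dedup_eq_length, map_congr_left (fun a ha => h a (mem_dedup.mp ha)),
    map_const', sum_replicate, smul_eq_mul, mul_comm]

/-- The occurrence word of a list in which every value occurs exactly twice is a Dyck word:
a suffix `s` contributes `s.dedup.length` letters `D` and at most as many letters `U`. -/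
def occurrenceDyckWord (l : List α) (h : ∀ a ∈ l, l.count a = 2) : DyckWord where
  toList := l.occurrenceWord
  count_U_eq_count_D := by
    have := count_U_add_count_D l.occurrenceWord
    have := length_eq_mul_length_dedup h
    simp only [length_occurrenceWord, count_D_occurrenceWord] at *
    omega
  count_D_le_count_U i := by
    have hs := length_le_mul_length_dedup (l := l.drop i)
      fun a => ((drop_sublist i l).count_le a).trans (by
        by_cases ha : a ∈ l
        · exact (h a ha).le
        · simp [count_eq_zero_of_not_mem ha])
    have hU := congrArg (count U) (take_append_drop i l.occurrenceWord)
    have hD := congrArg (count D) (take_append_drop i l.occurrenceWord)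
    have hw := count_U_add_count_D l.occurrenceWord
    have hsw := count_U_add_count_D (l.drop i).occurrenceWord
    have hl := length_eq_mul_length_dedup h
    simp only [count_append, drop_occurrenceWord, count_D_occurrenceWord,
      length_occurrenceWord] at *
    omega

lemma semilength_occurrenceDyckWord (l : List α) (h : ∀ a ∈ l, l.count a = 2) :
    (l.occurrenceDyckWord h).semilength = l.dedup.length := by
  have := count_U_add_count_D l.occurrenceWord
  have := length_eq_mul_length_dedup h
  simp only [DyckWord.semilength, occurrenceDyckWord, length_occurrenceWord,
    count_D_occurrenceWord] at *
  omega

end occurrenceWord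

lemma NonCrossing.append {l₁ l₂ : List α} (h₁ : l₁.NonCrossing) (h₂ : l₂.NonCrossing)
    (h : Disjoint l₁ l₂) : (l₁ ++ l₂).NonCrossing := by
  intro a b hab hs
  obtain ⟨q₁, q₂, hq, hq₁, hq₂⟩ := sublist_append_iff.mp hs
  rcases q₁ with _ | ⟨x, _ | ⟨y, _ | ⟨z, _ | ⟨w, _ | ⟨v, r⟩⟩⟩⟩⟩ <;> simp at hq
  · exact h₂ a b hab (hq ▸ hq₂)
  · obtain ⟨rfl, rfl⟩ := hq; exact h (a := a) (hq₁.subset (by simp)) (hq₂.subset (by simp))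
  · obtain ⟨rfl, rfl, rfl⟩ := hq; exact h (a := a) (hq₁.subset (by simp)) (hq₂.subset (by simp))
  · obtain ⟨rfl, rfl, rfl, rfl⟩ := hq
    exact h (a := b) (hq₁.subset (by simp)) (hq₂.subset (by simp))
  · obtain ⟨rfl, rfl, rfl, rfl, rfl⟩ := hq; exact h₁ a b hab hq₁

lemma Avoids122.append [Preorder α] {l₁ l₂ : List α} (h₁ : l₁.Avoids122) (h₂ : l₂.Avoids122)
    (h : ∀ a ∈ l₁, ∀ b ∈ l₂, b < a) : (l₁ ++ l₂).Avoids122 := by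
  intro a b hab hs
  obtain ⟨q₁, q₂, hq, hq₁, hq₂⟩ := sublist_append_iff.mp hs
  rcases q₁ with _ | ⟨x, _ | ⟨y, _ | ⟨z, _ | ⟨w, r⟩⟩⟩⟩ <;> simp at hq
  · exact h₂ a b hab (hq ▸ hq₂)
  · obtain ⟨rfl, rfl⟩ := hq
    exact (h a (hq₁.subset (by simp)) b (hq₂.subset (by simp))).not_gt hab
  · obtain ⟨rfl, rfl, rfl⟩ := hq
    exact (h b (hq₁.subset (by simp)) b (hq₂.subset (by simp))).false
  · obtain ⟨rfl, rfl, rfl, rfl⟩ := hq; exact h₁ a b hab hq₁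

lemma NonCrossing.cons_append_singleton {l : List α} {M : α} (h : l.NonCrossing) (hM : M ∉ l) :
    (M :: (l ++ [M])).NonCrossing := by
  have h' : (l ++ [M]).NonCrossing :=
    h.append (fun _ _ _ hs => by simpa using hs.length_le) (by simpa using hM)
  intro a b hab hs
  rcases sublist_cons_iff.mp hs with hs | ⟨r, hr, hs⟩
  · exact h' a b hab hs
  obtain ⟨rfl, rfl⟩ : a = M ∧ r = [b, a, b] := by simpa [eq_comm] using hr
  obtain ⟨q₁, q₂, hq, hq₁, hq₂⟩ := sublist_append_iff.mp hs
  rcases sublist_singleton.mp hq₂ with rfl | rfl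
  · rw [append_nil] at hq
    exact hM (hq₁.subset (by simp [← hq]))
  · obtain ⟨-, hba⟩ := append_inj' (hq.symm.trans (by rfl : [b, a, b] = [b, a] ++ [b])) rfl
    exact hab (by simpa using hba)

lemma Avoids122.cons_append_singleton [Preorder α] {l : List α} {M : α} (h : l.Avoids122)
    (hM : ∀ x ∈ l, x < M) : (M :: (l ++ [M])).Avoids122 := by
  intro a b hab hs
  rcases sublist_cons_iff.mp hs with hs | ⟨r, hr, hs⟩
  · obtain ⟨q₁, q₂, hq, hq₁, hq₂⟩ := sublist_append_iff.mp hs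
    rcases sublist_singleton.mp hq₂ with rfl | rfl
    · rw [append_nil] at hq
      exact h a b hab (hq ▸ hq₁)
    · obtain ⟨rfl, hbM⟩ := append_inj' (hq.symm.trans (by rfl : [a, b, b] = [a, b] ++ [b])) rfl
      obtain rfl : b = M := by simpa [eq_comm] using hbM
      exact (hM b (hq₁.subset (by simp))).false
  · obtain ⟨rfl, rfl⟩ : a = M ∧ r = [b, b] := by simpa [eq_comm] using hr
    have hb : b ∈ l ++ [a] := hs.subset (by simp)
    rcases mem_append.mp hb with hb | hb
    · exact (hM b hb).not_gt hab
    · exact hab.ne (by simpa [eq_comm] using hb)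

lemma pair_sublist_or_pair_sublist {a b : α} {l : List α} (ha : a ∈ l) (hb : b ∈ l)
    (hab : a ≠ b) : [a, b] <+ l ∨ [b, a] <+ l := by
  induction l with
  | nil => simp at ha
  | cons x l ih =>
    rcases mem_cons.mp ha with rfl | ha'
    · exact .inl ((singleton_sublist.mpr ((mem_cons.mp hb).resolve_left hab.symm)).cons_cons a)
    rcases mem_cons.mp hb with rfl | hb'
    · exact .inr ((singleton_sublist.mpr ha').cons_cons b)
    · exact (ih ha' hb').imp (.cons x) (.cons x)

/-- `l` is a non-crossing, `122`-avoiding arrangement of the multiset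
`{c, c, c + 1, c + 1, …, c + n - 1, c + n - 1}`. -/
structure IsNC122Perm (c n : ℕ) (l : List ℕ) : Prop where
  count_eq (v : ℕ) : l.count v = if c ≤ v ∧ v < c + n then 2 else 0
  nonCrossing : l.NonCrossing
  avoids122 : l.Avoids122

namespace IsNC122Perm

variable {c n : ℕ} {l : List ℕ}

lemma nil (c : ℕ) : IsNC122Perm c 0 [] :=
  ⟨fun v => by simp, fun _ _ _ hs => by simp at hs, fun _ _ _ hs => by simp at hs⟩

lemma mem_iff (h : IsNC122Perm c n l) {v : ℕ} : v ∈ l ↔ c ≤ v ∧ v < c + n := by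
  rw [← count_pos_iff, h.count_eq]
  split_ifs <;> simp_all

lemma count_eq_two_of_mem (h : IsNC122Perm c n l) {v : ℕ} (hv : v ∈ l) : l.count v = 2 := by
  rw [h.count_eq, if_pos (h.mem_iff.mp hv)]

lemma length_dedup (h : IsNC122Perm c n l) : l.dedup.length = n := by
  rw [← card_toFinset, show l.toFinset = Finset.Ico c (c + n) by ext; simp [h.mem_iff]]
  simp

lemma length_eq (h : IsNC122Perm c n l) : l.length = 2 * n := by
  rw [length_eq_mul_length_dedup fun _ => h.count_eq_two_of_mem, h.length_dedup]

variable {n₁ n₂ : ℕ} {l₁ l₂ : List ℕ}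

lemma nest_append (h₁ : IsNC122Perm (c + n₂) n₁ l₁) (h₂ : IsNC122Perm c n₂ l₂) :
    IsNC122Perm c (n₁ + n₂ + 1) ((c + n₁ + n₂) :: (l₁ ++ (c + n₁ + n₂) :: l₂)) := by
  have hsplit : (c + n₁ + n₂) :: (l₁ ++ (c + n₁ + n₂) :: l₂) =
      (c + n₁ + n₂) :: (l₁ ++ [c + n₁ + n₂]) ++ l₂ := by simp
  refine ⟨fun v => ?_, ?_, ?_⟩
  · simp only [count_cons, count_append, h₁.count_eq, h₂.count_eq, beq_iff_eq]
    split_ifs <;> omega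
  · rw [hsplit]
    refine (h₁.nonCrossing.cons_append_singleton ?_).append h₂.nonCrossing ?_
    · simp only [h₁.mem_iff]
      omega
    · intro v hv hv₂
      simp only [mem_cons, mem_append, h₁.mem_iff, not_mem_nil, or_false] at hv
      have := h₂.mem_iff.mp hv₂
      omega
  · rw [hsplit]
    refine (h₁.avoids122.cons_append_singleton ?_).append h₂.avoids122 ?_
    · intro x hx
      have := h₁.mem_iff.mp hx
      omega
    · intro a ha b hb
      simp only [mem_cons, mem_append, h₁.mem_iff, not_mem_nil, or_false] at ha
      have := h₂.mem_iff.mp hb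
      omega

lemma occurrenceWord_nest_append (h₁ : IsNC122Perm (c + n₂) n₁ l₁) (h₂ : IsNC122Perm c n₂ l₂) :
    ((c + n₁ + n₂) :: (l₁ ++ (c + n₁ + n₂) :: l₂)).occurrenceWord =
      U :: (l₁.occurrenceWord ++ D :: l₂.occurrenceWord) := by
  have hM : c + n₁ + n₂ ∉ l₂ := by simp [h₂.mem_iff]
  have hdisj : Disjoint l₁ ((c + n₁ + n₂) :: l₂) := by
    intro v hv hv₂
    have := h₁.mem_iff.mp hv
    simp only [mem_cons, h₂.mem_iff] at hv₂
    omega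
  rw [occurrenceWord, if_pos (by simp), occurrenceWord_append hdisj, occurrenceWord, if_neg hM]

lemma count_le_two (h : IsNC122Perm c n l) (v : ℕ) : l.count v ≤ 2 := by
  rw [h.count_eq]
  split_ifs <;> omega

variable {p r r' : List ℕ} {a a' : ℕ}

lemma mem_prefix_of_lt (h : IsNC122Perm c n (p ++ a :: r)) {v : ℕ} (hav : a < v)
    (hv : v < c + n) : v ∈ p := by
  by_contra hvp
  have hc : c ≤ v := (h.mem_iff.mp (by simp)).1.trans hav.le
  have hcount := h.count_eq v
  rw [if_pos ⟨hc, hv⟩, count_append, count_eq_zero_of_not_mem hvp, count_cons,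
    if_neg (by simpa using hav.ne)] at hcount
  have hvv : replicate 2 v <+ r := replicate_sublist_iff.mpr (by omega)
  exact h.avoids122 a v hav ((hvv.cons_cons a).trans (sublist_append_right p _))

lemma notMem_prefix (h : IsNC122Perm c n (p ++ a :: r)) (ha : a ∈ r) : a ∉ p := by
  have := h.count_le_two a
  have := count_pos_iff.mpr ha
  rw [count_append, count_cons_self] at *
  rw [← count_pos_iff]
  omega

lemma count_prefix_eq_one (h : IsNC122Perm c n (p ++ a :: r)) (ha : a ∉ r) : p.count a = 1 := by
  have := h.count_eq_two_of_mem (by simp : a ∈ p ++ a :: r)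
  rw [count_append, count_cons_self, count_eq_zero_of_not_mem ha] at this
  omega

lemma mem_suffix_of_count_prefix_eq_one (h : IsNC122Perm c n (p ++ a :: r)) {b : ℕ}
    (hb : p.count b = 1) (hba : b ≠ a) : b ∈ r := by
  have := h.count_eq_two_of_mem (mem_append_left _ (count_pos_iff.mp (by omega : 0 < p.count b)))
  rw [count_append, count_cons, if_neg (by simpa using hba.symm)] at this
  exact count_pos_iff.mp (by omega)

lemma eq_of_append_cons (h : IsNC122Perm c n (p ++ a :: r))
    (h' : IsNC122Perm c n (p ++ a' :: r')) (hw : a ∈ r ↔ a' ∈ r') : a = a' := by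
  by_cases ha : a ∈ r
  · have ha' := hw.mp ha
    have hlt {b b' : ℕ} {s s' : List ℕ} (hb : IsNC122Perm c n (p ++ b :: s))
        (hb' : IsNC122Perm c n (p ++ b' :: s')) (hbs' : b' ∈ s') : ¬ b < b' := fun hbb =>
      hb'.notMem_prefix hbs' (hb.mem_prefix_of_lt hbb (hb'.mem_iff.mp (by simp)).2)
    exact le_antisymm (not_lt.mp (hlt h' h ha)) (not_lt.mp (hlt h h' ha'))
  · have ha' : a' ∉ r' := mt hw.mpr ha
    by_contra hne
    have hpa := h.count_prefix_eq_one ha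
    have hpa' := h'.count_prefix_eq_one ha'
    rcases pair_sublist_or_pair_sublist (count_pos_iff.mp (by omega : 0 < p.count a))
      (count_pos_iff.mp (by omega : 0 < p.count a')) hne with hs | hs
    · have ha'r := h.mem_suffix_of_count_prefix_eq_one hpa' (Ne.symm hne)
      exact h.nonCrossing a a' hne (hs.append ((singleton_sublist.mpr ha'r).cons_cons a))
    · have har' := h'.mem_suffix_of_count_prefix_eq_one hpa hne
      exact h'.nonCrossing a' a (Ne.symm hne)
        (hs.append ((singleton_sublist.mpr har').cons_cons a'))

lemma eq_of_occurrenceWord_eq {l l' : List ℕ} (h : IsNC122Perm c n l) (h' : IsNC122Perm c n l')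
    (hw : l.occurrenceWord = l'.occurrenceWord) : l = l' := by
  suffices key : ∀ p r r', IsNC122Perm c n (p ++ r) → IsNC122Perm c n (p ++ r') →
      (p ++ r).occurrenceWord = (p ++ r').occurrenceWord → r = r' from
    key [] l l' h h' hw
  intro p r
  induction r generalizing p with
  | nil =>
    intro r' _ _ hw
    simpa [eq_comm] using congrArg length hw
  | cons a r ih =>
    intro r' h h' hw
    have hsuffix := congrArg (drop p.length) hw
    simp only [drop_occurrenceWord, drop_left] at hsuffix
    obtain _ | ⟨a', r'⟩ := r'
    · simp [occurrenceWord] at hsuffix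
    simp only [occurrenceWord, cons.injEq] at hsuffix
    have hmem : a ∈ r ↔ a' ∈ r' := by
      by_cases ha : a ∈ r <;> by_cases ha' : a' ∈ r' <;> simp_all
    obtain rfl := h.eq_of_append_cons h' hmem
    congr 1
    exact ih (p ++ [a]) r' (by simpa using h) (by simpa using h') (by simpa using hw)

end IsNC122Perm

theorem exists_isNC122Perm_occurrenceWord_eq (p : DyckWord) (c : ℕ) :
    ∃ l, IsNC122Perm c p.semilength l ∧ l.occurrenceWord = p.toList := by
  rw [← DyckWord.ofTree_toTree p]
  induction p.toTree generalizing c with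
  | nil => exact ⟨[], IsNC122Perm.nil c, rfl⟩
  | node _ x y ihx ihy =>
    obtain ⟨l₂, h₂, hw₂⟩ := ihy c
    obtain ⟨l₁, h₁, hw₁⟩ := ihx (c + (DyckWord.ofTree y).semilength)
    refine ⟨_, ?_, (h₁.occurrenceWord_nest_append h₂).trans ?_⟩
    · simpa [DyckWord.ofTree, add_right_comm] using h₁.nest_append h₂
    · rw [hw₁, hw₂]
      show _ = [U] ++ (DyckWord.ofTree x).toList ++ [D] ++ (DyckWord.ofTree y).toList
      simp

end List

lemma count_ofFn_val {m n : ℕ} (π : Fin m → Fin n) (v : Fin n) :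
    (List.ofFn fun i => (π i : ℕ)).count (v : ℕ) = (Finset.univ.filter (π · = v)).card := by
  rw [show (List.ofFn fun i => (π i : ℕ)) = (List.ofFn π).map Fin.val from List.map_ofFn.symm,
    List.count_map_of_injective _ _ Fin.val_injective, ← Multiset.coe_count,
    ← Fin.univ_val_map, Multiset.count_map, Finset.card, Finset.filter_val]
  simp [eq_comm]

lemma nonCrossing_ofFn_iff {n : ℕ} (π : Fin (2 * n) → Fin n) :
    (List.ofFn fun i => (π i : ℕ)).NonCrossing ↔ NonCrossing π := by
  simp only [List.NonCrossing, List.sublist_ofFn_iff, NonCrossing]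
  constructor
  · rintro h ⟨i, j, k, l, hij, hjk, hkl, hik, hjl, hne⟩
    refine h (π i) (π j) (Fin.val_injective.ne hne) ⟨![i, j, k, l], ?_, ?_⟩
    · simp [Fin.strictMono_iff_lt_succ, Fin.forall_fin_succ, *]
    · intro t; fin_cases t <;> simp [hik, hjl]
  · rintro h a b hab ⟨e, he, hv⟩
    obtain ⟨h0, h1, h2, h3⟩ : a = π (e 0) ∧ b = π (e 1) ∧ a = π (e 2) ∧ b = π (e 3) :=
      ⟨hv 0, hv 1, hv 2, hv 3⟩
    refine h ⟨e 0, e 1, e 2, e 3, he (show (0 : Fin 4) < 1 by decide),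
      he (show (1 : Fin 4) < 2 by decide), he (show (2 : Fin 4) < 3 by decide),
      Fin.ext (by omega), Fin.ext (by omega), fun h01 => hab ?_⟩
    rw [h0, h1, h01]

lemma avoids122_ofFn_iff {n : ℕ} (π : Fin (2 * n) → Fin n) :
    (List.ofFn fun i => (π i : ℕ)).Avoids122 ↔ Avoids122 π := by
  simp only [List.Avoids122, List.sublist_ofFn_iff, Avoids122]
  constructor
  · rintro h ⟨i, j, k, hij, hjk, hlt, hjk'⟩
    refine h (π i) (π j) hlt ⟨![i, j, k], ?_, ?_⟩
    · simp [Fin.strictMono_iff_lt_succ, Fin.forall_fin_succ, *]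
    · intro t; fin_cases t <;> simp [hjk']
  · rintro h a b hab ⟨e, he, hv⟩
    obtain ⟨h0, h1, h2⟩ : a = π (e 0) ∧ b = π (e 1) ∧ b = π (e 2) := ⟨hv 0, hv 1, hv 2⟩
    exact h ⟨e 0, e 1, e 2, he (show (0 : Fin 3) < 1 by decide),
      he (show (1 : Fin 3) < 2 by decide), Fin.lt_def.mpr (by omega), Fin.ext (by omega)⟩

lemma isNC122Perm_ofFn_iff {n : ℕ} (π : Fin (2 * n) → Fin n) :
    (List.ofFn fun i => (π i : ℕ)).IsNC122Perm 0 n ↔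
      IsMultisetPerm π ∧ NonCrossing π ∧ Avoids122 π := by
  rw [← nonCrossing_ofFn_iff, ← avoids122_ofFn_iff]
  constructor
  · intro h
    refine ⟨fun v => ?_, h.nonCrossing, h.avoids122⟩
    rw [← count_ofFn_val, h.count_eq, if_pos (by omega)]
  · rintro ⟨hperm, hnc, h122⟩
    refine ⟨fun v => ?_, hnc, h122⟩
    by_cases hv : v < n
    · rw [if_pos (by omega), show v = ((⟨v, hv⟩ : Fin n) : ℕ) from rfl, count_ofFn_val, hperm]
    · rw [if_neg (by omega), List.count_eq_zero, List.mem_ofFn]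
      rintro ⟨i, hi⟩
      exact hv (hi ▸ (π i).isLt)

abbrev NC122Perm (n : ℕ) :=
  {π : Fin (2 * n) → Fin n // IsMultisetPerm π ∧ NonCrossing π ∧ Avoids122 π}

namespace NC122Perm

variable {n : ℕ}

def toDyckWord (π : NC122Perm n) : {p : DyckWord // p.semilength = n} :=
  have h := (isNC122Perm_ofFn_iff π.1).mpr π.2
  ⟨_, (List.semilength_occurrenceDyckWord _ fun _ => h.count_eq_two_of_mem).trans h.length_dedup⟩
lemma toDyckWord_injective : Function.Injective (toDyckWord (n := n)) := by
  rintro ⟨π, hπ⟩ ⟨π', hπ'⟩ h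
  have hw := congrArg (fun p => p.1.toList) h
  have hl := ((isNC122Perm_ofFn_iff π).mpr hπ).eq_of_occurrenceWord_eq
    ((isNC122Perm_ofFn_iff π').mpr hπ') hw
  ext i : 2
  exact Fin.ext (congrFun (List.ofFn_inj.mp hl) i)

lemma toDyckWord_surjective : Function.Surjective (toDyckWord (n := n)) := by
  rintro ⟨p, rfl⟩
  obtain ⟨l, hl, hw⟩ := List.exists_isNC122Perm_occurrenceWord_eq p 0
  have hlen := hl.length_eq
  let π : Fin (2 * p.semilength) → Fin p.semilength := fun i =>
    ⟨l[i.1], by simpa using (hl.mem_iff.mp (List.getElem_mem (by omega))).2⟩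
  have hπ : (List.ofFn fun i => (π i : ℕ)) = l := List.ext_getElem (by simp [hlen]) (by simp [π])
  refine ⟨⟨π, (isNC122Perm_ofFn_iff π).mp (hπ ▸ hl)⟩, Subtype.ext (DyckWord.ext ?_)⟩
  exact (congrArg List.occurrenceWord hπ).trans hw

end NC122Perm

theorem stmt12_general (n : ℕ) :
    Nat.card {π : Fin (2*n) → Fin n //
      IsMultisetPerm π ∧ NonCrossing π ∧ Avoids122 π} =
      Nat.choose (2*n) n / (n+1) := by
  rw [← Nat.centralBinom_eq_two_mul_choose, ← catalan_eq_centralBinom_div,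
    ← DyckWord.card_dyckWord_semilength_eq_catalan, ← Nat.card_eq_fintype_card]
  exact Nat.card_eq_of_bijective _ ⟨NC122Perm.toDyckWord_injective, NC122Perm.toDyckWord_surjective⟩

theorem stmt12 (n : ℕ) (hn : 1 ≤ n) :
    Nat.card {π : Fin (2*n) → Fin n //
      IsMultisetPerm π ∧ NonCrossing π ∧ Avoids122 π} =
      Nat.choose (2*n) n / (n+1) :=
  stmt12_general n
end

section
/- For all n ≥ 1, the number of non-crossing permutations of {1,1,...,n,n} avoiding both the pattern 122 and the pattern 132 equals the n-th Catalan number C_n. -/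
/-- Avoiding 132: no i<j<k with π_i < π_k < π_j. -/
def Avoids132 {n : ℕ} (π : Fin (2*n) → Fin n) : Prop :=
  ¬ ∃ i j k : Fin (2*n), i < j ∧ j < k ∧ π i < π k ∧ π k < π j

/-
In such a permutation the first occurrences of the values come in decreasing order (a larger value
first seen later would give a 122), and each second occurrence closes the smallest value that is
open at that moment (closing a larger one would give a crossing, or a 122). So the permutation is
recovered from its word of first/second occurrences, which is a Dyck word of semilength n.
Conversely, reading any Dyck word by the rule "an up step opens the largest unused value, a down
step closes the smallest open value" yields a permutation with all four properties; 132-avoidance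
holds because open values are nested like a stack. This bijection with Dyck words gives C_n.
-/

open Finset

namespace DoublePerm

section Occurrences

variable (f : ℕ → ℕ)

def occ (v i : ℕ) : ℕ := #{t ∈ range i | f t = v}

variable {f}

lemma occ_succ (v i : ℕ) : occ f v (i + 1) = occ f v i + if f i = v then 1 else 0 := by
  simp only [occ, range_add_one, filter_insert]
  split_ifs with h
  · exact card_insert_of_notMem (by simp)
  · rfl

lemma occ_mono (v : ℕ) : Monotone (occ f v) := fun _ _ h =>
  card_le_card (filter_subset_filter _ (range_subset_range.mpr h))

lemma occ_lt_occ {v j k m : ℕ} (hjk : j ≤ k) (hkm : k < m) (hk : f k = v) :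
    occ f v j < occ f v m :=
  calc occ f v j ≤ occ f v k := occ_mono v hjk
    _ < occ f v (k + 1) := by rw [occ_succ, if_pos hk]; omega
    _ ≤ occ f v m := occ_mono v hkm

lemma exists_of_occ_lt {v j m : ℕ} (h : occ f v j < occ f v m) :
    ∃ k, j ≤ k ∧ k < m ∧ f k = v := by
  by_contra! hno
  have hsub : ({t ∈ range m | f t = v} : Finset ℕ) ⊆ {t ∈ range j | f t = v} := by
    intro t
    simp only [mem_filter, mem_range]
    exact fun ⟨htm, htv⟩ => ⟨by_contra fun htj => hno t (by omega) htm htv, htv⟩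
  exact absurd (card_le_card hsub) (not_le.mpr h)

lemma occ_pos_iff {v i : ℕ} : 0 < occ f v i ↔ v ∈ (range i).image f := by
  simp [occ, card_pos, Finset.Nonempty]

lemma occ_eq_zero_iff_notMem {v i : ℕ} : occ f v i = 0 ↔ v ∉ (range i).image f := by
  rw [← occ_pos_iff, Nat.pos_iff_ne_zero, not_not]

lemma exists_firstOcc_le (k : ℕ) : ∃ c ≤ k, f c = f k ∧ f c ∉ (range c).image f := by
  have hex : ∃ c, f c = f k := ⟨k, rfl⟩
  refine ⟨Nat.find hex, Nat.find_min' hex rfl, Nat.find_spec hex, ?_⟩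
  simp only [mem_image, mem_range, not_exists, not_and]
  intro t ht htv
  exact Nat.find_min hex ht (htv.trans (Nat.find_spec hex))

lemma occ_eq_zero_of_lt {v j k m : ℕ} (hm : occ f v m ≤ 2) (hjk : j < k) (hkm : k < m)
    (hj : f j = v) (hk : f k = v) : occ f v j = 0 := by
  have := occ_lt_occ le_rfl (Nat.lt_succ_self j) hj
  have := occ_lt_occ hjk hkm hk
  omega

lemma occ_eq_one_of_lt_of_le {v t j k m : ℕ} (hm : occ f v m ≤ 2) (htj : t < j) (hjk : j ≤ k)
    (hkm : k < m) (ht : f t = v) (hk : f k = v) : occ f v j = 1 := by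
  have := occ_lt_occ le_rfl htj ht
  have := occ_lt_occ hjk hkm hk
  omega

lemma sum_two_sub_occ {i : ℕ} (h2 : ∀ v, occ f v i ≤ 2) :
    ∑ v ∈ (range i).image f, (2 - occ f v i) = 2 * #((range i).image f) - i := by
  rw [sum_tsub_distrib _ fun v _ => h2 v, sum_const, smul_eq_mul, mul_comm]
  simp only [occ]
  rw [← card_eq_sum_card_image, card_range]

lemma exists_occ_eq_one {i : ℕ} (h2 : ∀ v, occ f v i ≤ 2)
    (hlt : i < 2 * #((range i).image f)) : ∃ v, occ f v i = 1 := by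
  by_contra! hne
  have hzero : ∑ v ∈ (range i).image f, (2 - occ f v i) = 0 := by
    refine sum_eq_zero fun v hv => ?_
    have := occ_pos_iff.mpr hv
    have := h2 v
    have := hne v
    omega
  rw [sum_two_sub_occ h2] at hzero
  omega

lemma occ_eq_two_of_eq {i : ℕ} (h2 : ∀ v, occ f v i ≤ 2)
    (heq : 2 * #((range i).image f) = i) {v : ℕ} (hv : v ∈ (range i).image f) :
    occ f v i = 2 := by
  have hzero := sum_two_sub_occ h2
  rw [heq, Nat.sub_self, sum_eq_zero_iff] at hzero
  have := hzero v hv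
  have := h2 v
  omega

end Occurrences

def upCount (w : ℕ → Bool) (i : ℕ) : ℕ := #{t ∈ range i | w t}

lemma upCount_succ (w : ℕ → Bool) (i : ℕ) :
    upCount w (i + 1) = upCount w i + if w i then 1 else 0 := by
  simp only [upCount, range_add_one, filter_insert]
  split_ifs with h
  · exact card_insert_of_notMem (by simp)
  · rfl

lemma upCount_mono (w : ℕ → Bool) : Monotone (upCount w) := fun _ _ h =>
  card_le_card (filter_subset_filter _ (range_subset_range.mpr h))

lemma upCount_congr {w w' : ℕ → Bool} {i : ℕ} (h : ∀ t < i, w t = w' t) :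
    upCount w i = upCount w' i := by
  unfold upCount
  congr 1
  exact filter_congr fun t ht => by rw [h t (mem_range.mp ht)]

structure IsBalanced (n : ℕ) (w : ℕ → Bool) : Prop where
  le_two_mul_upCount : ∀ i ≤ 2 * n, i ≤ 2 * upCount w i
  upCount_two_mul : upCount w (2 * n) = n

lemma IsBalanced.upCount_lt {n : ℕ} {w : ℕ → Bool} (hw : IsBalanced n w) {i : ℕ}
    (hi : i < 2 * n) (hwi : w i) : upCount w i < n := by
  have := upCount_mono w (Nat.succ_le_of_lt hi)
  rw [upCount_succ, if_pos hwi, hw.upCount_two_mul] at this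
  omega

lemma IsBalanced.upCount_le {n : ℕ} {w : ℕ → Bool} (hw : IsBalanced n w) {i : ℕ}
    (hi : i ≤ 2 * n) : upCount w i ≤ n :=
  hw.upCount_two_mul ▸ upCount_mono w hi

def firstOccWord (f : ℕ → ℕ) (i : ℕ) : Bool := decide (f i ∉ (range i).image f)

lemma upCount_firstOccWord (f : ℕ → ℕ) (i : ℕ) :
    upCount (firstOccWord f) i = #((range i).image f) := by
  induction i with
  | zero => rfl
  | succ i ih =>
    rw [upCount_succ, ih, range_add_one, image_insert, firstOccWord]
    by_cases h : f i ∈ (range i).image f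
    · simp [h]
    · simp [h, card_insert_of_notMem]

lemma firstOccWord_congr {f g : ℕ → ℕ} {i : ℕ} (h : ∀ t ≤ i, f t = g t) :
    firstOccWord f i = firstOccWord g i := by
  have himage : (range i).image f = (range i).image g :=
    image_congr fun t ht => h t (mem_range.mp ht).le
  rw [firstOccWord, firstOccWord, himage, h i le_rfl]

section Decode

variable (n : ℕ) (w : ℕ → Bool)

/-- Reads `w` as a Dyck word (`true` = up step): an up step takes the largest value not used yet, a
down step the smallest value seen exactly once so far. The `attach` only serves the recursion;
`decode_def` states the rule with `occ`. -/
noncomputable def decode (i : ℕ) : ℕ :=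
  if w i then n - 1 - upCount w i
  else sInf {v | ((range i).attach.filter fun t : range i => decode t.1 = v).card = 1}
termination_by i
decreasing_by all_goals exact mem_range.mp (Subtype.prop _)

lemma decode_def (i : ℕ) : decode n w i =
    if w i then n - 1 - upCount w i else sInf {v | occ (decode n w) v i = 1} := by
  rw [decode]
  congr! 3
  funext v
  rw [filter_attach (fun t => decode n w t = v), card_map, card_attach, occ]

def DecodeInvariant (i : ℕ) : Prop :=
  (range i).image (decode n w) = Ico (n - upCount w i) n ∧ ∀ v, occ (decode n w) v i ≤ 2

variable {n w}

lemma decode_of_up {i : ℕ} (hwi : w i) : decode n w i = n - 1 - upCount w i := by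
  rw [decode_def, if_pos hwi]

lemma decode_of_down {i : ℕ} (hwi : w i = false) :
    decode n w i = sInf {v | occ (decode n w) v i = 1} := by
  rw [decode_def, if_neg (by simp [hwi])]

variable (hw : IsBalanced n w)
include hw

lemma DecodeInvariant.occ_decode_eq_one {i : ℕ} (h : DecodeInvariant n w i) (hi : i < 2 * n)
    (hwi : w i = false) : occ (decode n w) (decode n w i) i = 1 := by
  obtain ⟨himage, hle⟩ := h
  have hbal := hw.le_two_mul_upCount (i + 1) hi
  rw [upCount_succ, hwi] at hbal
  have hopen : ∃ v, occ (decode n w) v i = 1 := by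
    refine exists_occ_eq_one hle ?_
    rw [himage, Nat.card_Ico, Nat.sub_sub_self (hw.upCount_le hi.le)]
    simpa using hbal
  rw [decode_of_down hwi]
  exact Nat.sInf_mem hopen

lemma DecodeInvariant.succ {i : ℕ} (h : DecodeInvariant n w i) (hi : i < 2 * n) :
    DecodeInvariant n w (i + 1) := by
  obtain ⟨himage, hle⟩ := h
  unfold DecodeInvariant
  rw [range_add_one, image_insert, upCount_succ]
  cases hwi : w i
  · have hocc := DecodeInvariant.occ_decode_eq_one hw ⟨himage, hle⟩ hi hwi
    have hmem : decode n w i ∈ (range i).image (decode n w) := occ_pos_iff.mp (by omega)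
    refine ⟨by simpa [insert_eq_of_mem hmem] using himage, fun v => ?_⟩
    rw [occ_succ]
    split_ifs with hv
    · rw [← hv, hocc]
    · simpa using hle v
  · have hlt := hw.upCount_lt hi hwi
    have hnew : decode n w i ∉ (range i).image (decode n w) := by
      rw [himage, decode_of_up hwi]
      simp only [mem_Ico, not_and_or]
      omega
    refine ⟨?_, fun v => ?_⟩
    · rw [himage, decode_of_up hwi]
      ext v
      simp only [mem_insert, mem_Ico, if_true]
      omega
    · rw [occ_succ]
      split_ifs with hv
      · rw [← hv, Nat.eq_zero_of_not_pos (mt occ_pos_iff.mp hnew)]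
        omega
      · simpa using hle v

lemma decodeInvariant {i : ℕ} (hi : i ≤ 2 * n) : DecodeInvariant n w i := by
  induction i with
  | zero => simp [DecodeInvariant, occ, upCount]
  | succ i ih => exact (ih (by omega)).succ hw (by omega)

end Decode

section DecodeBalanced

variable {n : ℕ} {w : ℕ → Bool}

lemma decode_le_of_down {i v : ℕ} (hwi : w i = false) (hv : occ (decode n w) v i = 1) :
    decode n w i ≤ v :=
  decode_of_down hwi ▸ Nat.sInf_le hv

variable (hw : IsBalanced n w)
include hw

lemma decode_lt {i : ℕ} (hi : i < 2 * n) : decode n w i < n := by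
  have hmem := mem_image_of_mem (decode n w) (self_mem_range_succ i)
  rw [(decodeInvariant hw hi).1] at hmem
  exact (mem_Ico.mp hmem).2

lemma occ_decode_le_two (v : ℕ) : occ (decode n w) v (2 * n) ≤ 2 :=
  (decodeInvariant hw le_rfl).2 v

lemma occ_decode_eq_two {v : ℕ} (hv : v < n) : occ (decode n w) v (2 * n) = 2 := by
  obtain ⟨himage, hle⟩ := decodeInvariant hw le_rfl
  rw [hw.upCount_two_mul, Nat.sub_self] at himage
  exact occ_eq_two_of_eq hle (by rw [himage, Nat.card_Ico]; omega) (by simp [himage, hv])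

lemma decode_lt_decode_of_up {t i : ℕ} (hti : t < i) (hi : i < 2 * n) (hwi : w i) :
    decode n w i < decode n w t := by
  have hmem := mem_image_of_mem (decode n w) (mem_range.mpr hti)
  rw [(decodeInvariant hw hi.le).1, mem_Ico] at hmem
  have := hw.upCount_lt hi hwi
  rw [decode_of_up hwi]
  omega

lemma up_iff_occ_eq_zero {i : ℕ} (hi : i < 2 * n) :
    w i ↔ occ (decode n w) (decode n w i) i = 0 := by
  have hinv := decodeInvariant hw hi.le
  cases hwi : w i
  · simp [hinv.occ_decode_eq_one hw hi hwi]
  · have hlt := hw.upCount_lt hi hwi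
    simp only [true_iff, occ_eq_zero_iff_notMem, hinv.1, decode_of_up hwi, mem_Ico]
    omega

lemma firstOccWord_decode {i : ℕ} (hi : i < 2 * n) : firstOccWord (decode n w) i = w i := by
  rw [Bool.eq_iff_iff, up_iff_occ_eq_zero hw hi, occ_eq_zero_iff_notMem, firstOccWord,
    decide_eq_true_iff]

lemma decode_avoids122 {i j k : ℕ} (hij : i < j) (hjk : j < k) (hk : k < 2 * n)
    (hjk_eq : decode n w j = decode n w k) : ¬ decode n w i < decode n w j := by
  have hj : w j := (up_iff_occ_eq_zero hw (hjk.trans hk)).mpr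
    (occ_eq_zero_of_lt (occ_decode_le_two hw _) hjk hk rfl hjk_eq.symm)
  exact lt_asymm (decode_lt_decode_of_up hw hij (hjk.trans hk) hj)

lemma decode_nonCrossing {i j k l : ℕ} (hij : i < j) (hjk : j < k) (hkl : k < l)
    (hl : l < 2 * n) (hik : decode n w i = decode n w k) (hjl : decode n w j = decode n w l) :
    False := by
  set f := decode n w
  have hj : w j := (up_iff_occ_eq_zero hw (by omega)).mpr
    (occ_eq_zero_of_lt (occ_decode_le_two hw _) (hjk.trans hkl) hl rfl hjl.symm)
  have hk : w k = false := by
    rw [Bool.eq_false_iff, Ne, up_iff_occ_eq_zero hw (by omega)]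
    exact (Nat.zero_lt_of_lt (occ_lt_occ le_rfl (hij.trans hjk) hik)).ne'
  have hkj : f k ≤ f j := decode_le_of_down hk
    (occ_eq_one_of_lt_of_le (occ_decode_le_two hw _) hjk hkl.le hl rfl hjl.symm)
  have hji : f j < f i := decode_lt_decode_of_up hw hij (by omega) hj
  omega

lemma decode_avoids132 {i j k : ℕ} (hij : i < j) (hjk : j < k) (hk : k < 2 * n) :
    ¬ (decode n w i < decode n w k ∧ decode n w k < decode n w j) := by
  set f := decode n w
  rintro ⟨hik, hkj⟩
  have hj : w j = false := by
    rw [Bool.eq_false_iff]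
    exact fun hj => lt_asymm (decode_lt_decode_of_up hw hij (hjk.trans hk) hj) (hik.trans hkj)
  obtain ⟨a, hai, hfa, -⟩ := exists_firstOcc_le (f := f) i
  obtain ⟨c, hck, hfc, hcfirst⟩ := exists_firstOcc_le (f := f) k
  have hc : w c := (up_iff_occ_eq_zero hw (by omega)).mpr (occ_eq_zero_iff_notMem.mpr hcfirst)
  have hca : c < a := by
    by_contra! hac
    rcases hac.lt_or_eq with hac | rfl
    · have : f c < f a := decode_lt_decode_of_up hw hac (by omega) hc
      omega
    · exact hik.ne (hfa.symm.trans hfc)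
  have hjk' : f j ≤ f k := decode_le_of_down hj
    (occ_eq_one_of_lt_of_le (occ_decode_le_two hw _) (by omega) hjk.le hk hfc rfl)
  omega

end DecodeBalanced

structure IsAdmissible (n : ℕ) (f : ℕ → ℕ) : Prop where
  lt : ∀ t < 2 * n, f t < n
  occ_eq_two : ∀ v < n, occ f v (2 * n) = 2
  avoids122 : ∀ i j k, i < j → j < k → k < 2 * n → f j = f k → ¬ f i < f j
  nonCrossing : ∀ i j k l, i < j → j < k → k < l → l < 2 * n → f i = f k → f j = f l → f i = f j
  avoids132 : ∀ i j k, i < j → j < k → k < 2 * n → ¬ (f i < f k ∧ f k < f j)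

lemma isAdmissible_decode {n : ℕ} {w : ℕ → Bool} (hw : IsBalanced n w) :
    IsAdmissible n (decode n w) where
  lt _ := decode_lt hw
  occ_eq_two _ := occ_decode_eq_two hw
  avoids122 _ _ _ := decode_avoids122 hw
  nonCrossing _ _ _ _ hij hjk hkl hl hik hjl := (decode_nonCrossing hw hij hjk hkl hl hik hjl).elim
  avoids132 _ _ _ := decode_avoids132 hw

namespace IsAdmissible

variable {n : ℕ} {f : ℕ → ℕ} (hf : IsAdmissible n f)
include hf

lemma occ_le_two (v : ℕ) : occ f v (2 * n) ≤ 2 := by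
  by_cases hv : v < n
  · exact (hf.occ_eq_two v hv).le
  · rw [occ_eq_zero_iff_notMem.mpr]
    · omega
    · simp only [mem_image, mem_range, not_exists, not_and]
      exact fun t ht htv => hv (htv ▸ hf.lt t ht)

lemma image_range : (range (2 * n)).image f = range n := by
  ext v
  constructor
  · simp only [mem_image, mem_range]
    rintro ⟨t, ht, rfl⟩
    exact hf.lt t ht
  · intro hv
    exact occ_pos_iff.mp (by rw [hf.occ_eq_two v (mem_range.mp hv)]; omega)

lemma isBalanced_firstOccWord : IsBalanced n (firstOccWord f) where
  le_two_mul_upCount i hi := by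
    rw [upCount_firstOccWord]
    simpa using card_le_mul_card_image (range i) 2 fun v _ =>
      (occ_mono v hi).trans (hf.occ_le_two v)
  upCount_two_mul := by rw [upCount_firstOccWord, hf.image_range, card_range]

lemma exists_second_occ {c : ℕ} (hc : c < 2 * n) (hfirst : f c ∉ (range c).image f) :
    ∃ k, c < k ∧ k < 2 * n ∧ f k = f c := by
  have hone : occ f (f c) (c + 1) = 1 := by
    rw [occ_succ, if_pos rfl, occ_eq_zero_iff_notMem.mpr hfirst]
  exact exists_of_occ_lt (hone.trans_lt (by rw [hf.occ_eq_two _ (hf.lt c hc)]; omega))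

lemma image_range_eq_Ioo {i : ℕ} (hi : i < 2 * n) (hfirst : f i ∉ (range i).image f) :
    (range i).image f = Ioo (f i) n := by
  obtain ⟨q, hiq, hq, hfq⟩ := hf.exists_second_occ hi hfirst
  ext v
  constructor
  · simp only [mem_image, mem_range, mem_Ioo]
    rintro ⟨t, hti, rfl⟩
    have hne : f t ≠ f i := fun h => hfirst (mem_image.mpr ⟨t, mem_range.mpr hti, h⟩)
    have := hf.avoids122 t i q hti hiq hq hfq.symm
    have := hf.lt t (by omega)
    omega
  · rintro hv
    rw [mem_Ioo] at hv
    by_contra hnot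
    obtain ⟨t, ht, rfl⟩ := mem_image.mp (hf.image_range ▸ mem_range.mpr hv.2)
    obtain ⟨c, hct, hfc, hcfirst⟩ := exists_firstOcc_le (f := f) t
    have hic : i < c := by
      by_contra! hci
      rcases hci.lt_or_eq with hci | rfl
      · exact hnot (mem_image.mpr ⟨c, mem_range.mpr hci, hfc⟩)
      · exact hv.1.ne hfc
    obtain ⟨k, hck, hk, hfk⟩ := hf.exists_second_occ (hct.trans_lt (mem_range.mp ht)) hcfirst
    exact hf.avoids122 i c k hic hck hk hfk.symm (hfc ▸ hv.1)

lemma isLeast_occ_eq_one {i : ℕ} (hi : i < 2 * n) (hmem : f i ∈ (range i).image f) :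
    IsLeast {v | occ f v i = 1} (f i) := by
  obtain ⟨p, hpi, hfp⟩ := mem_image.mp hmem
  rw [mem_range] at hpi
  refine ⟨occ_eq_one_of_lt_of_le (hf.occ_le_two _) hpi le_rfl hi hfp rfl, fun v hv => ?_⟩
  replace hv : occ f v i = 1 := hv
  by_contra! hvi
  have hvn : v < n := hvi.trans (hf.lt i hi)
  obtain ⟨a, hai, hfa⟩ := mem_image.mp (occ_pos_iff.mp (by rw [hv]; omega))
  rw [mem_range] at hai
  obtain ⟨b, hib, hb, hfb⟩ := exists_of_occ_lt
    (hv.trans_lt (by rw [hf.occ_eq_two v hvn]; omega))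
  have hib' : i < b := hib.lt_of_ne fun h => hvi.ne (by rw [h, hfb])
  have hpa : p < a := by
    by_contra! hap
    rcases hap.lt_or_eq with hap | rfl
    · exact hf.avoids122 a p i hap hpi hi hfp (hfa ▸ hfp ▸ hvi)
    · exact hvi.ne (hfa.symm.trans hfp)
  have := hf.nonCrossing p a i b hpa hai hib' hb hfp (hfa.trans hfb.symm)
  omega

lemma decode_eq {w : ℕ → Bool} (hw : ∀ i < 2 * n, w i = firstOccWord f i) :
    ∀ i < 2 * n, decode n w i = f i := by
  intro i hi
  induction i using Nat.strong_induction_on with | _ i ih =>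
  have hocc (v : ℕ) : occ (decode n w) v i = occ f v i := by
    unfold occ
    congr 1
    exact filter_congr fun t ht => by rw [ih t (mem_range.mp ht) (by simp at ht; omega)]
  cases hwi : w i
  · have hmem : f i ∈ (range i).image f := by
      rw [hw i hi, firstOccWord] at hwi
      simpa using hwi
    rw [decode_of_down hwi]
    simp only [hocc]
    exact (hf.isLeast_occ_eq_one hi hmem).csInf_eq
  · have hfirst : f i ∉ (range i).image f := by
      rw [hw i hi, firstOccWord] at hwi
      simpa using hwi
    have hcard : upCount w i = n - 1 - f i := by
      rw [upCount_congr fun t ht => hw t (by omega), upCount_firstOccWord,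
        hf.image_range_eq_Ioo hi hfirst, Nat.card_Ioo]
      omega
    have := hf.lt i hi
    rw [decode_of_up hwi, hcard]
    omega

end IsAdmissible

section Fin

variable {n : ℕ} {π : Fin (2 * n) → Fin n} {f : ℕ → ℕ} (hπ : ∀ i, (π i : ℕ) = f i)
include hπ

lemma card_filter_eq_occ (v : Fin n) : #{i | π i = v} = occ f v (2 * n) := by
  rw [occ, ← Nat.Iio_eq_range, ← Fin.map_valEmbedding_univ, filter_map, card_map]
  congr 1
  ext i
  simp [Fin.ext_iff, hπ]

lemma isMultisetPerm_iff : IsMultisetPerm π ↔ ∀ v < n, occ f v (2 * n) = 2 := by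
  simp only [IsMultisetPerm, card_filter_eq_occ hπ]
  exact ⟨fun h v hv => h ⟨v, hv⟩, fun h v => h v v.2⟩

lemma avoids122_iff :
    Avoids122 π ↔ ∀ i j k, i < j → j < k → k < 2 * n → f j = f k → ¬ f i < f j := by
  simp only [Avoids122, not_exists, not_and, Fin.lt_def, Fin.ext_iff, hπ, Fin.forall_iff]
  exact ⟨fun h i j k hij hjk hk he hlt => h i (by omega) j (by omega) k hk hij hjk hlt he,
    fun h i _ j _ k hk hij hjk hlt he => h i j k hij hjk hk he hlt⟩

lemma nonCrossing_iff : NonCrossing π ↔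
    ∀ i j k l, i < j → j < k → k < l → l < 2 * n → f i = f k → f j = f l → f i = f j := by
  simp only [NonCrossing, not_exists, not_and, not_not, Fin.lt_def, Fin.ext_iff, hπ,
    Fin.forall_iff]
  exact ⟨fun h i j k l hij hjk hkl hl => h i (by omega) j (by omega) k (by omega) l hl hij hjk hkl,
    fun h i _ j _ k _ l hl hij hjk hkl => h i j k l hij hjk hkl hl⟩

lemma avoids132_iff :
    Avoids132 π ↔ ∀ i j k, i < j → j < k → k < 2 * n → ¬ (f i < f k ∧ f k < f j) := by
  simp only [Avoids132, not_exists, not_and, Fin.lt_def, hπ, Fin.forall_iff]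
  exact ⟨fun h i j k hij hjk hk => h i (by omega) j (by omega) k hk hij hjk,
    fun h i _ j _ k hk hij hjk => h i j k hij hjk hk⟩

lemma conditions_iff_isAdmissible :
    (IsMultisetPerm π ∧ NonCrossing π ∧ Avoids122 π ∧ Avoids132 π) ↔ IsAdmissible n f := by
  rw [isMultisetPerm_iff hπ, nonCrossing_iff hπ, avoids122_iff hπ, avoids132_iff hπ]
  have hlt (t : ℕ) (ht : t < 2 * n) : f t < n := hπ ⟨t, ht⟩ ▸ (π ⟨t, ht⟩).isLt
  exact ⟨fun ⟨h2, hnc, h122, h132⟩ => ⟨hlt, h2, h122, hnc, h132⟩,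
    fun hf => ⟨hf.occ_eq_two, hf.nonCrossing, hf.avoids122, hf.avoids132⟩⟩

end Fin

section Dyck

open DyckStep

def stepWord (l : List DyckStep) (i : ℕ) : Bool := decide (l[i]? = some U)

lemma upCount_stepWord (l : List DyckStep) (i : ℕ) :
    upCount (stepWord l) i = (l.take i).count U := by
  induction i with
  | zero => simp [upCount]
  | succ i ih =>
    rw [upCount_succ, ih, List.take_add_one, List.count_append]
    rcases h : l[i]? with _ | ⟨_ | _⟩ <;> simp [stepWord, h]

lemma count_U_add_count_D (l : List DyckStep) : l.count U + l.count D = l.length := by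
  induction l with
  | nil => rfl
  | cons s l ih => cases s <;> simp <;> omega

lemma isBalanced_stepWord {n : ℕ} {p : DyckWord} (hp : p.semilength = n) :
    IsBalanced n (stepWord p.toList) where
  le_two_mul_upCount i hi := by
    have hlen := p.two_mul_semilength_eq_length
    have := count_U_add_count_D (p.toList.take i)
    have := p.count_D_le_count_U i
    rw [List.length_take] at *
    rw [upCount_stepWord]
    omega
  upCount_two_mul := by
    rw [upCount_stepWord, ← hp, p.two_mul_semilength_eq_length, List.take_length]
    rfl

variable {n : ℕ} {w : ℕ → Bool}

def stepList (n : ℕ) (w : ℕ → Bool) : List DyckStep :=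
  List.ofFn fun t : Fin (2 * n) => if w t then U else D

lemma length_stepList : (stepList n w).length = 2 * n :=
  List.length_ofFn

lemma stepWord_stepList {i : ℕ} (hi : i < 2 * n) : stepWord (stepList n w) i = w i := by
  by_cases h : w i <;> simp [stepList, stepWord, hi, h]

lemma count_U_take_stepList {i : ℕ} (hi : i ≤ 2 * n) :
    ((stepList n w).take i).count U = upCount w i := by
  rw [← upCount_stepWord, upCount_congr fun t ht => stepWord_stepList (by omega)]

lemma count_U_stepList (hw : IsBalanced n w) : (stepList n w).count U = n := by
  rw [← List.take_of_length_le length_stepList.le, count_U_take_stepList le_rfl,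
    hw.upCount_two_mul]

def ofBalanced (hw : IsBalanced n w) : DyckWord where
  toList := stepList n w
  count_U_eq_count_D := by
    have := count_U_add_count_D (stepList n w)
    rw [count_U_stepList hw, length_stepList] at *
    omega
  count_D_le_count_U i := by
    rw [List.take_eq_take_min, length_stepList]
    have hU := count_U_take_stepList (w := w) (min_le_right i (2 * n))
    have hlen := count_U_add_count_D ((stepList n w).take (min i (2 * n)))
    have := hw.le_two_mul_upCount _ (min_le_right i (2 * n))
    rw [List.length_take, length_stepList, min_eq_left (min_le_right _ _)] at hlen
    omega

lemma semilength_ofBalanced (hw : IsBalanced n w) : (ofBalanced hw).semilength = n :=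
  count_U_stepList hw

lemma stepWord_ofBalanced (hw : IsBalanced n w) {i : ℕ} (hi : i < 2 * n) :
    stepWord (ofBalanced hw).toList i = w i :=
  stepWord_stepList hi

lemma ofBalanced_eq {p : DyckWord} (hp : p.semilength = n) (hw : IsBalanced n w)
    (h : ∀ i < 2 * n, w i = stepWord p.toList i) : ofBalanced hw = p := by
  have hlen : p.toList.length = 2 * n := by rw [← p.two_mul_semilength_eq_length, hp]
  ext1
  refine List.ext_getElem (by rw [hlen]; exact length_stepList) fun i h1 h2 => ?_
  have hi : i < 2 * n := hlen ▸ h2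
  simp only [ofBalanced, stepList, List.getElem_ofFn, h i hi, stepWord,
    List.getElem?_eq_getElem h2]
  cases p.toList[i] <;> simp

end Dyck

def natExtend {n : ℕ} (π : Fin (2 * n) → Fin n) (t : ℕ) : ℕ :=
  if h : t < 2 * n then π ⟨t, h⟩ else 0

lemma natExtend_apply {n : ℕ} (π : Fin (2 * n) → Fin n) (i : Fin (2 * n)) :
    natExtend π i = π i :=
  dif_pos i.2

lemma isAdmissible_natExtend {n : ℕ} {π : Fin (2 * n) → Fin n}
    (hπ : IsMultisetPerm π ∧ NonCrossing π ∧ Avoids122 π ∧ Avoids132 π) :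
    IsAdmissible n (natExtend π) :=
  (conditions_iff_isAdmissible fun i => (natExtend_apply π i).symm).mp hπ

noncomputable def decodePerm {n : ℕ} {w : ℕ → Bool} (hw : IsBalanced n w) :
    Fin (2 * n) → Fin n :=
  fun i => ⟨decode n w i, decode_lt hw i.2⟩

noncomputable def equivDyckWord (n : ℕ) :
    {π : Fin (2 * n) → Fin n // IsMultisetPerm π ∧ NonCrossing π ∧ Avoids122 π ∧ Avoids132 π} ≃
      {p : DyckWord // p.semilength = n} where
  toFun π := ⟨ofBalanced (isAdmissible_natExtend π.2).isBalanced_firstOccWord,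
    semilength_ofBalanced _⟩
  invFun p := ⟨decodePerm (isBalanced_stepWord p.2),
    (conditions_iff_isAdmissible fun _ => rfl).mpr (isAdmissible_decode (isBalanced_stepWord p.2))⟩
  left_inv π := by
    ext i
    simp only [decodePerm]
    rw [(isAdmissible_natExtend π.2).decode_eq (fun t ht => stepWord_ofBalanced _ ht) i i.2,
      natExtend_apply]
  right_inv p := by
    have hw : IsBalanced n (stepWord p.1.toList) := isBalanced_stepWord p.2
    ext1
    dsimp only
    refine ofBalanced_eq p.2 _ fun i hi => ?_
    rw [firstOccWord_congr fun t ht => dif_pos (ht.trans_lt hi), firstOccWord_decode hw hi]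

end DoublePerm

theorem stmt13_general (n : ℕ) :
    Nat.card {π : Fin (2*n) → Fin n //
      IsMultisetPerm π ∧ NonCrossing π ∧ Avoids122 π ∧ Avoids132 π} =
      Nat.choose (2*n) n / (n+1) := by
  rw [Nat.card_congr (DoublePerm.equivDyckWord n), Nat.card_eq_fintype_card,
    DyckWord.card_dyckWord_semilength_eq_catalan, catalan_eq_centralBinom_div, Nat.centralBinom]

theorem stmt13 (n : ℕ) (hn : 1 ≤ n) :
    Nat.card {π : Fin (2*n) → Fin n //
      IsMultisetPerm π ∧ NonCrossing π ∧ Avoids122 π ∧ Avoids132 π} =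
      Nat.choose (2*n) n / (n+1) :=
  stmt13_general n
end

section
/- For all n ≥ 1, the number of non-crossing permutations of {1,1,...,n,n} avoiding both the pattern 122 and the pattern 231 equals 2^{n-1}. -/
/-!
In a permutation π of {1,1,…,n+1,n+1} avoiding 122, the first entry is n+1: otherwise it forms a
122 with the two copies of n+1. If π is moreover non-crossing and avoids 231, the second copy of n+1
sits either at position 2 or at the end: anywhere strictly between, the entries x at position 2 and
y at the end give a 231 when y < x, a crossing with the two copies of n+1 when y = x, and a 122 with
the other copy of y when x < y. Deleting both copies of n+1 therefore leaves a permutation σ of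
{1,1,…,n,n} with the same properties, and conversely both (n+1)(n+1)σ and (n+1)σ(n+1) inherit them
from σ, because every entry of σ lies on the same side of the second copy of n+1. For n ≥ 1 the two
insertions are distinct, so the count doubles at each step.
-/

open Finset

namespace MultisetPerm

variable {n : ℕ}

def Good (π : Fin (2*n) → Fin n) : Prop :=
  IsMultisetPerm π ∧ NonCrossing π ∧ Avoids122 π ∧ Avoids231 π

theorem _root_.IsMultisetPerm.exists_pair {π : Fin (2*n) → Fin n} (h : IsMultisetPerm π)
    (v : Fin n) : ∃ p q, p < q ∧ ∀ r, π r = v ↔ r = p ∨ r = q := by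
  obtain ⟨a, b, hab, hset⟩ := card_eq_two.1 (h v)
  have hmem (r : Fin (2*n)) : π r = v ↔ r = a ∨ r = b := by
    simpa using Finset.ext_iff.1 hset r
  rcases hab.lt_or_gt with hlt | hgt
  · exact ⟨a, b, hlt, hmem⟩
  · exact ⟨b, a, hgt, fun r => (hmem r).trans or_comm⟩

section Embedding

variable {m : ℕ} {π : Fin (2*m) → Fin m} {σ : Fin (2*n) → Fin n}
  {e : Fin (2*n) → Fin (2*m)} {f : Fin n → Fin m}

theorem _root_.NonCrossing.of_comp (he : StrictMono e) (hf : StrictMono f)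
    (hπσ : ∀ i, π (e i) = f (σ i)) (hπ : NonCrossing π) : NonCrossing σ := by
  rintro ⟨i, j, k, l, hij, hjk, hkl, hik, hjl, hne⟩
  refine hπ ⟨e i, e j, e k, e l, he hij, he hjk, he hkl, ?_, ?_, ?_⟩ <;> simp only [hπσ]
  exacts [congrArg f hik, congrArg f hjl, hf.injective.ne hne]

theorem _root_.Avoids122.of_comp (he : StrictMono e) (hf : StrictMono f)
    (hπσ : ∀ i, π (e i) = f (σ i)) (hπ : Avoids122 π) : Avoids122 σ := by
  rintro ⟨i, j, k, hij, hjk, hlt, heq⟩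
  refine hπ ⟨e i, e j, e k, he hij, he hjk, ?_, ?_⟩ <;> simp only [hπσ]
  exacts [hf hlt, congrArg f heq]

theorem _root_.Avoids231.of_comp (he : StrictMono e) (hf : StrictMono f)
    (hπσ : ∀ i, π (e i) = f (σ i)) (hπ : Avoids231 π) : Avoids231 σ := by
  rintro ⟨i, j, k, hij, hjk, hki, hij'⟩
  refine hπ ⟨e i, e j, e k, he hij, he hjk, ?_, ?_⟩ <;> simp only [hπσ]
  exacts [hf hki, hf hij']

end Embedding

def topPos (n : ℕ) (b : Bool) : Fin (2*(n+1)) :=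
  ⟨if b then 1 else 2*n+1, by split <;> omega⟩

def embed (n : ℕ) (b : Bool) (i : Fin (2*n)) : Fin (2*(n+1)) :=
  ⟨i + if b then 2 else 1, by split <;> omega⟩

theorem embed_strictMono (b : Bool) : StrictMono (embed n b) := fun i j hij => by
  simp only [embed, Fin.mk_lt_mk]
  exact Nat.add_lt_add_right hij _

theorem exists_embed_eq_iff (b : Bool) (p : Fin (2*(n+1))) :
    (∃ i, embed n b i = p) ↔ ¬(p.val = 0 ∨ p = topPos n b) := by
  constructor
  · rintro ⟨i, rfl⟩
    have := i.isLt
    cases b <;> simp only [embed, topPos, Fin.ext_iff, Bool.false_eq_true, ↓reduceIte] <;> omega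
  · intro h
    have := p.isLt
    refine ⟨⟨p - if b then 2 else 1, ?_⟩, ?_⟩ <;>
      cases b <;> simp only [embed, topPos, Fin.ext_iff, Bool.false_eq_true, ↓reduceIte] at h ⊢ <;>
      omega

-- `b = true`: `π = (n+1)(n+1)σ`;  `b = false`: `π = (n+1)σ(n+1)`.
structure IsTopInsertion (b : Bool) (π : Fin (2*(n+1)) → Fin (n+1)) (σ : Fin (2*n) → Fin n) :
    Prop where
  apply_embed : ∀ i, π (embed n b i) = (σ i).castSucc
  eq_last_iff : ∀ p, π p = Fin.last n ↔ p.val = 0 ∨ p = topPos n b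

namespace IsTopInsertion

variable {b : Bool} {π : Fin (2*(n+1)) → Fin (n+1)} {σ : Fin (2*n) → Fin n}

theorem exists_embed_eq (h : IsTopInsertion b π σ) {p : Fin (2*(n+1))} (hp : π p ≠ Fin.last n) :
    ∃ i, embed n b i = p :=
  (exists_embed_eq_iff b p).2 (mt (h.eq_last_iff p).2 hp)

theorem val_of_eq_last (h : IsTopInsertion b π σ) {p : Fin (2*(n+1))} (hp : π p = Fin.last n) :
    p.val = 0 ∨ p.val = 1 ∨ p.val = 2*n+1 := by
  rcases (h.eq_last_iff p).1 hp with h0 | rfl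
  · exact Or.inl h0
  · cases b
    exacts [Or.inr (Or.inr rfl), Or.inr (Or.inl rfl)]

theorem val_ne_zero (h : IsTopInsertion b π σ) {p : Fin (2*(n+1))} (hp : π p ≠ Fin.last n) :
    p.val ≠ 0 :=
  fun h0 => hp ((h.eq_last_iff p).2 (Or.inl h0))

theorem isMultisetPerm_iff (h : IsTopInsertion b π σ) : IsMultisetPerm π ↔ IsMultisetPerm σ := by
  have hcast (v : Fin n) : (univ.filter fun p => π p = v.castSucc) =
      (univ.filter fun i => σ i = v).map ⟨embed n b, (embed_strictMono b).injective⟩ := by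
    ext p
    simp only [mem_filter, mem_univ, true_and, mem_map, Function.Embedding.coeFn_mk]
    constructor
    · intro hp
      obtain ⟨i, rfl⟩ := h.exists_embed_eq (hp ▸ Fin.castSucc_ne_last v)
      exact ⟨i, Fin.castSucc_inj.1 ((h.apply_embed i).symm.trans hp), rfl⟩
    · rintro ⟨i, hi, rfl⟩
      rw [h.apply_embed, hi]
  have hlast : (univ.filter fun p => π p = Fin.last n) = {⟨0, by omega⟩, topPos n b} := by
    ext p
    simp only [mem_filter, mem_univ, true_and, mem_insert, mem_singleton, h.eq_last_iff,
      Fin.ext_iff]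
  refine ⟨fun hπ v => ?_, fun hσ v => ?_⟩
  · rw [← card_map, ← hcast]
    exact hπ _
  · cases v using Fin.lastCases with
    | last =>
      rw [hlast, card_pair]
      cases b <;> simp [topPos, Fin.ext_iff]
    | cast v => rw [hcast, card_map, hσ v]

theorem nonCrossing_iff (h : IsTopInsertion b π σ) : NonCrossing π ↔ NonCrossing σ := by
  refine ⟨NonCrossing.of_comp (embed_strictMono b) Fin.strictMono_castSucc h.apply_embed,
    fun hσ => ?_⟩
  rintro ⟨i, j, k, l, hij, hjk, hkl, hik, hjl, hne⟩
  have hl := l.isLt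
  by_cases hi : π i = Fin.last n
  · have := h.val_of_eq_last hi
    have := h.val_of_eq_last (hik.symm.trans hi)
    simp only [Fin.lt_def] at hij hjk hkl
    omega
  by_cases hj : π j = Fin.last n
  · have := h.val_of_eq_last hj
    have := h.val_of_eq_last (hjl.symm.trans hj)
    have := h.val_ne_zero hi
    simp only [Fin.lt_def] at hij hjk hkl
    omega
  obtain ⟨i, rfl⟩ := h.exists_embed_eq hi
  obtain ⟨j, rfl⟩ := h.exists_embed_eq hj
  obtain ⟨k, rfl⟩ := h.exists_embed_eq (fun hk => hi (hik.trans hk))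
  obtain ⟨l, rfl⟩ := h.exists_embed_eq (fun hl => hj (hjl.trans hl))
  simp only [h.apply_embed, (embed_strictMono b).lt_iff_lt, Fin.castSucc_inj, ne_eq] at *
  exact hσ ⟨i, j, k, l, hij, hjk, hkl, hik, hjl, hne⟩

theorem avoids122_iff (h : IsTopInsertion b π σ) : Avoids122 π ↔ Avoids122 σ := by
  refine ⟨Avoids122.of_comp (embed_strictMono b) Fin.strictMono_castSucc h.apply_embed,
    fun hσ => ?_⟩
  rintro ⟨i, j, k, hij, hjk, hlt, heq⟩
  have hi := (hlt.trans_le (Fin.le_last _)).ne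
  by_cases hj : π j = Fin.last n
  · have := h.val_of_eq_last hj
    have := h.val_of_eq_last (heq.symm.trans hj)
    have := h.val_ne_zero hi
    simp only [Fin.lt_def] at hij hjk
    omega
  obtain ⟨i, rfl⟩ := h.exists_embed_eq hi
  obtain ⟨j, rfl⟩ := h.exists_embed_eq hj
  obtain ⟨k, rfl⟩ := h.exists_embed_eq (fun hk => hj (heq.trans hk))
  simp only [h.apply_embed, (embed_strictMono b).lt_iff_lt, Fin.castSucc_inj,
    Fin.castSucc_lt_castSucc_iff] at *
  exact hσ ⟨i, j, k, hij, hjk, hlt, heq⟩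

theorem avoids231_iff (h : IsTopInsertion b π σ) : Avoids231 π ↔ Avoids231 σ := by
  refine ⟨Avoids231.of_comp (embed_strictMono b) Fin.strictMono_castSucc h.apply_embed,
    fun hσ => ?_⟩
  rintro ⟨i, j, k, hij, hjk, hki, hij'⟩
  have hi := (hij'.trans_le (Fin.le_last _)).ne
  by_cases hj : π j = Fin.last n
  · have := h.val_of_eq_last hj
    have := h.val_ne_zero hi
    have := k.isLt
    simp only [Fin.lt_def] at hij hjk
    omega
  obtain ⟨i, rfl⟩ := h.exists_embed_eq hi
  obtain ⟨j, rfl⟩ := h.exists_embed_eq hj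
  obtain ⟨k, rfl⟩ := h.exists_embed_eq (hki.trans_le (Fin.le_last _)).ne
  simp only [h.apply_embed, (embed_strictMono b).lt_iff_lt, Fin.castSucc_lt_castSucc_iff] at *
  exact hσ ⟨i, j, k, hij, hjk, hki, hij'⟩

theorem good_iff (h : IsTopInsertion b π σ) : Good π ↔ Good σ := by
  simp only [Good, h.isMultisetPerm_iff, h.nonCrossing_iff, h.avoids122_iff, h.avoids231_iff]

theorem inj (hn : 1 ≤ n) {b' : Bool} {σ' : Fin (2*n) → Fin n} (h : IsTopInsertion b π σ)
    (h' : IsTopInsertion b' π σ') : b = b' ∧ σ = σ' := by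
  have hb : b = b' := by
    have := (h'.eq_last_iff _).1 ((h.eq_last_iff (topPos n b)).2 (Or.inr rfl))
    cases b <;> cases b' <;>
      simp only [topPos, Fin.ext_iff, Bool.false_eq_true, ↓reduceIte] at this ⊢ <;> omega
  subst hb
  refine ⟨rfl, funext fun i => Fin.castSucc_injective _ ?_⟩
  rw [← h.apply_embed, h'.apply_embed]

end IsTopInsertion

noncomputable def insertTop (b : Bool) (σ : Fin (2*n) → Fin n) (p : Fin (2*(n+1))) : Fin (n+1) :=
  if h : ∃ i, embed n b i = p then (σ h.choose).castSucc else Fin.last n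

theorem isTopInsertion_insertTop (b : Bool) (σ : Fin (2*n) → Fin n) :
    IsTopInsertion b (insertTop b σ) σ where
  apply_embed i := by
    have h : ∃ j, embed n b j = embed n b i := ⟨i, rfl⟩
    rw [insertTop, dif_pos h, (embed_strictMono b).injective h.choose_spec]
  eq_last_iff p := by
    rw [← not_iff_not, ← exists_embed_eq_iff, insertTop]
    split_ifs with h <;> simp [h, Fin.castSucc_ne_last]

theorem IsTopInsertion.eq_insertTop {b : Bool} {π : Fin (2*(n+1)) → Fin (n+1)}
    {σ : Fin (2*n) → Fin n} (h : IsTopInsertion b π σ) : π = insertTop b σ := by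
  funext p
  have h' := isTopInsertion_insertTop b σ
  by_cases hp : π p = Fin.last n
  · rw [hp, (h'.eq_last_iff p).2 ((h.eq_last_iff p).1 hp)]
  · obtain ⟨i, rfl⟩ := h.exists_embed_eq hp
    rw [h.apply_embed, h'.apply_embed]

section Decomposition

variable {π : Fin (2*(n+1)) → Fin (n+1)}

theorem apply_zero_eq_last (hπ : IsMultisetPerm π) (h122 : Avoids122 π) :
    π ⟨0, by omega⟩ = Fin.last n := by
  obtain ⟨p, q, hpq, hlast⟩ := hπ.exists_pair (Fin.last n)
  have hp := (hlast p).2 (Or.inl rfl)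
  by_contra h0
  have hp0 : (⟨0, by omega⟩ : Fin (2*(n+1))) < p := by
    refine Fin.lt_def.2 (Nat.pos_of_ne_zero fun hp0 => h0 ?_)
    rwa [show (⟨0, _⟩ : Fin (2*(n+1))) = p from Fin.ext hp0.symm]
  exact h122 ⟨_, p, q, hp0, hpq, hp ▸ lt_of_le_of_ne (Fin.le_last _) h0,
    hp.trans ((hlast q).2 (Or.inr rfl)).symm⟩

theorem exists_eq_last_iff (hπ : IsMultisetPerm π) (h0 : π ⟨0, by omega⟩ = Fin.last n) :
    ∃ t : Fin (2*(n+1)), 0 < t.val ∧ ∀ p, π p = Fin.last n ↔ p.val = 0 ∨ p = t := by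
  obtain ⟨p, q, hpq, hlast⟩ := hπ.exists_pair (Fin.last n)
  have h0pq := (hlast _).1 h0
  simp only [Fin.ext_iff] at h0pq
  rw [Fin.lt_def] at hpq
  have hp : p.val = 0 := by omega
  refine ⟨q, by omega, fun r => (hlast r).trans ?_⟩
  rw [Fin.ext_iff (a := r), hp]

theorem Good.val_eq_one_or_eq_two_mul_add_one (hgood : Good π) {t : Fin (2*(n+1))} (ht0 : 0 < t.val)
    (ht : ∀ p, π p = Fin.last n ↔ p.val = 0 ∨ p = t) : t.val = 1 ∨ t.val = 2*n+1 := by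
  obtain ⟨hmp, hnc, h122, h231⟩ := hgood
  by_contra! hmid
  have htn := t.isLt
  set a : Fin (2*(n+1)) := ⟨1, by omega⟩
  set z : Fin (2*(n+1)) := ⟨2*n+1, by omega⟩
  have hat : a < t := Fin.lt_def.2 (by simp only [a]; omega)
  have htz : t < z := Fin.lt_def.2 (by simp only [z]; omega)
  have hne_last {p : Fin (2*(n+1))} (hp : 0 < p.val) (hpt : p.val ≠ t.val) : π p < Fin.last n :=
    lt_of_le_of_ne (Fin.le_last _) (fun h => by rcases (ht p).1 h with h | rfl <;> omega)
  have ha := hne_last (p := a) (by simp [a]) (by simp only [a]; omega)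
  have hz := hne_last (p := z) (by simp [z]) (by simp only [z]; omega)
  have htop := (ht t).2 (Or.inr rfl)
  have h0 := (ht ⟨0, by omega⟩).2 (Or.inl rfl)
  rcases lt_trichotomy (π z) (π a) with hlt | heq | hgt
  · exact h231 ⟨a, t, z, hat, htz, hlt, htop ▸ ha⟩
  · exact hnc ⟨_, a, t, z, Fin.lt_def.2 (by simp [a]), hat, htz, h0.trans htop.symm, heq.symm,
      h0 ▸ ha.ne'⟩
  · obtain ⟨p, q, hpq, hpz⟩ := hmp.exists_pair (π z)
    have hp := (hpz p).2 (Or.inl rfl)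
    have hzq : z = q := by
      rcases (hpz z).1 rfl with h | h
      · have := q.isLt
        rw [← h, Fin.lt_def] at hpq
        simp only [z] at hpq
        omega
      · exact h
    subst hzq
    have hap : a < p := by
      have hp0 : p.val ≠ 0 := fun h => hz.ne (hp.symm.trans ((ht p).2 (Or.inl h)))
      have hpa : p ≠ a := fun h => hgt.ne' (hp.symm.trans (congrArg π h))
      rw [Fin.lt_def]
      simp only [a, Fin.ne_iff_vne] at hpa ⊢
      omega
    exact h122 ⟨a, p, z, hap, hpq, hp ▸ hgt, hp⟩

theorem exists_isTopInsertion_of_eq_last_iff {b : Bool}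
    (hπ : ∀ p, π p = Fin.last n ↔ p.val = 0 ∨ p = topPos n b) : ∃ σ, IsTopInsertion b π σ :=
  have hne (i : Fin (2*n)) : π (embed n b i) ≠ Fin.last n :=
    mt (hπ _).1 ((exists_embed_eq_iff b _).1 ⟨i, rfl⟩)
  ⟨fun i => (π (embed n b i)).castPred (hne i),
    ⟨fun i => Fin.castSucc_castPred _ (hne i), hπ⟩⟩

theorem Good.exists_isTopInsertion (hgood : Good π) : ∃ b σ, IsTopInsertion b π σ := by
  obtain ⟨t, ht0, ht⟩ := exists_eq_last_iff hgood.1 (apply_zero_eq_last hgood.1 hgood.2.2.1)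
  have htb : t = topPos n (decide (t.val = 1)) := by
    rcases hgood.val_eq_one_or_eq_two_mul_add_one ht0 ht with h | h <;>
      ext <;> simp only [topPos, h] <;> simp
  exact ⟨_, exists_isTopInsertion_of_eq_last_iff (htb ▸ ht)⟩

end Decomposition

theorem card_good_succ (hn : 1 ≤ n) :
    Nat.card {π : Fin (2*(n+1)) → Fin (n+1) // Good π} =
      2 * Nat.card {σ : Fin (2*n) → Fin n // Good σ} := by
  have hins := isTopInsertion_insertTop (n := n)
  let F : Bool × {σ : Fin (2*n) → Fin n // Good σ} → {π // Good π} :=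
    fun x => ⟨insertTop x.1 x.2.1, (hins x.1 x.2).good_iff.2 x.2.2⟩
  have hF : F.Bijective := by
    refine ⟨fun ⟨b, σ, _⟩ ⟨b', σ', _⟩ hbb => ?_, fun ⟨π, hπ⟩ => ?_⟩
    · have h' : IsTopInsertion b' (insertTop b σ) σ' := by
        rw [show insertTop b σ = insertTop b' σ' from congrArg Subtype.val hbb]
        exact hins b' σ'
      obtain ⟨rfl, rfl⟩ := (hins b σ).inj hn h'
      rfl
    · obtain ⟨b, σ, h⟩ := hπ.exists_isTopInsertion
      exact ⟨(b, ⟨σ, h.good_iff.1 hπ⟩), Subtype.ext h.eq_insertTop.symm⟩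
  rw [← Nat.card_eq_of_bijective F hF, Nat.card_prod, Nat.card_eq_fintype_card (α := Bool),
    Fintype.card_bool]

theorem good_fin_one (π : Fin (2*1) → Fin 1) : Good π := by
  have no_three (i j k : Fin (2*1)) (hij : i < j) (hjk : j < k) : False := by
    have := k.isLt
    rw [Fin.lt_def] at hij hjk
    omega
  refine ⟨fun v => ?_, fun ⟨i, j, k, _, hij, hjk, _⟩ => no_three i j k hij hjk,
    fun ⟨i, j, k, hij, hjk, _⟩ => no_three i j k hij hjk,
    fun ⟨i, j, k, hij, hjk, _⟩ => no_three i j k hij hjk⟩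
  simp [Subsingleton.elim _ v]

theorem card_good_one : Nat.card {π : Fin (2*1) → Fin 1 // Good π} = 1 := by
  rw [Nat.card_congr (Equiv.subtypeUnivEquiv good_fin_one)]
  simp

end MultisetPerm

theorem stmt15 (n : ℕ) (hn : 1 ≤ n) :
    Nat.card {π : Fin (2*n) → Fin n //
      IsMultisetPerm π ∧ NonCrossing π ∧ Avoids122 π ∧ Avoids231 π} =
      2^(n-1) := by
  change Nat.card {π : Fin (2*n) → Fin n // MultisetPerm.Good π} = 2^(n-1)
  induction n, hn using Nat.le_induction with
  | base => exact MultisetPerm.card_good_one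
  | succ n hn ih =>
    rw [MultisetPerm.card_good_succ hn, ih, ← pow_succ', Nat.sub_add_cancel hn, Nat.add_sub_cancel]
end

section
/- For all n ≥ 1, the number of non-crossing permutations of {1,1,...,n,n} avoiding both the pattern 122 and the pattern 123 equals 2^{n-1}. -/
/-- Avoiding 123: no i<j<k with π_i < π_j < π_k. -/
def Avoids123 {n : ℕ} (π : Fin (2*n) → Fin n) : Prop :=
  ¬ ∃ i j k : Fin (2*n), i < j ∧ j < k ∧ π i < π j ∧ π j < π k


namespace S16

/-- `startN b i` = start of the block containing index `i`, given boundary bits `b`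
(`b j = true` means `j` is the last index of its block). -/
def startN (b : ℕ → Bool) : ℕ → ℕ
  | 0 => 0
  | i+1 => if b i then i+1 else startN b i

lemma startN_le (b : ℕ → Bool) : ∀ i, startN b i ≤ i
  | 0 => le_refl 0
  | i+1 => by
      unfold startN; split
      · exact le_refl _
      · exact (startN_le b i).trans (Nat.le_succ i)

lemma startN_mono (b : ℕ → Bool) : ∀ {i j : ℕ}, i ≤ j → startN b i ≤ startN b j := by
  intro i j h
  induction j with
  | zero => have : i = 0 := by omega
            subst this; exact le_refl _
  | succ j ih =>
    rcases Nat.lt_or_ge i (j+1) with h' | h'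
    · have hij := ih (by omega)
      show startN b i ≤ startN b (j+1)
      by_cases hb : b j
      · simp [startN, hb]; exact (startN_le b i).trans (by omega)
      · simp [startN, hb]; exact hij
    · have : i = j+1 := by omega
      subst this; exact le_refl _

lemma startN_isStart (b : ℕ → Bool) : ∀ i, startN b i = 0 ∨ b (startN b i - 1) = true
  | 0 => Or.inl rfl
  | i+1 => by
      unfold startN; split
      · rename_i h; right; simpa using h
      · exact startN_isStart b i

lemma startN_no_b (b : ℕ → Bool) : ∀ i, ∀ m, startN b i ≤ m → m < i → b m = false
  | 0 => fun m _ h => absurd h (by omega)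
  | i+1 => by
      intro m h1 h2
      by_cases hb : b i
      · simp [startN, hb] at h1; omega
      · simp [startN, hb] at h1
        rcases Nat.lt_or_ge m i with h | h
        · exact startN_no_b b i m h1 h
        · have : m = i := by omega
          subst this; simpa using hb

lemma startN_eq (b : ℕ → Bool) {k : ℕ} : ∀ {j}, k ≤ j → (k = 0 ∨ b (k-1) = true) →
    (∀ m, k ≤ m → m < j → b m = false) → startN b j = k := by
  intro j
  induction j with
  | zero => intro h _ _; simp [startN]; omega
  | succ j ih =>
    intro hk h0 hmid
    rcases Nat.lt_or_ge j k with h | h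
    · have : k = j + 1 := by omega
      subst this
      rcases h0 with h0 | h0
      · omega
      · simp at h0; simp [startN, h0]
    · have hbj : b j = false := hmid j h (by omega)
      simp [startN, hbj]
      exact ih h h0 (fun m hm hm' => hmid m hm (by omega))

lemma startN_succ_of_b (b : ℕ → Bool) {j} (h : b j = true) : startN b (j+1) = j+1 := by
  simp [startN, h]

variable {n : ℕ}

/-- Extend boundary bits to all of ℕ, with everything from `n-1` on a boundary. -/
def bN (n : ℕ) (B : Fin (n-1) → Bool) : ℕ → Bool :=
  fun j => if h : j < n-1 then B ⟨j, h⟩ else true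

lemma bN_high (B : Fin (n-1) → Bool) {j : ℕ} (h : n-1 ≤ j) : bN n B j = true := by
  simp [bN]; omega

lemma bN_false_lt {B : Fin (n-1) → Bool} {j : ℕ} (h : bN n B j = false) : j < n-1 := by
  by_contra h'
  rw [bN_high B (by omega)] at h; simp at h

lemma eN_ex (B : Fin (n-1) → Bool) (k : ℕ) : ∃ j, k ≤ j ∧ bN n B j = true := by
  refine ⟨max k (n-1), le_max_left _ _, bN_high B (le_max_right _ _)⟩

/-- least boundary `≥ k`. -/
def eN (n : ℕ) (B : Fin (n-1) → Bool) (k : ℕ) : ℕ := Nat.find (eN_ex B k)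

lemma eN_le_ge (B : Fin (n-1) → Bool) (k : ℕ) : k ≤ eN n B k :=
  (Nat.find_spec (eN_ex B k)).1

lemma eN_b (B : Fin (n-1) → Bool) (k : ℕ) : bN n B (eN n B k) = true :=
  (Nat.find_spec (eN_ex B k)).2

lemma eN_min (B : Fin (n-1) → Bool) {k j : ℕ} (h1 : k ≤ j) (h2 : bN n B j = true) :
    eN n B k ≤ j := Nat.find_min' (eN_ex B k) ⟨h1, h2⟩

lemma eN_no_b (B : Fin (n-1) → Bool) {k m : ℕ} (h1 : k ≤ m) (h2 : m < eN n B k) :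
    bN n B m = false := by
  by_contra h
  have := eN_min B h1 (by simpa using h)
  omega

lemma eN_le (B : Fin (n-1) → Bool) {k : ℕ} (h : k ≤ n-1) : eN n B k ≤ n-1 :=
  eN_min B h (bN_high B (le_refl _))

lemma startN_eN (B : Fin (n-1) → Bool) {k : ℕ} (h0 : k = 0 ∨ bN n B (k-1) = true) :
    startN (bN n B) (eN n B k) = k :=
  startN_eq _ (eN_le_ge B k) h0 (fun m hm hm' => eN_no_b B hm hm')

/-- The explicit permutation, ℕ-valued. -/
def phiN (n : ℕ) (b : ℕ → Bool) (p : ℕ) : ℕ :=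
  if p % 2 = 0 then n - 1 - p / 2
  else if b (p / 2) then n - 1 - startN b (p / 2) else n - 2 - p / 2

lemma phiN_even (b : ℕ → Bool) (j : ℕ) : phiN n b (2*j) = n - 1 - j := by
  simp [phiN, Nat.mul_div_cancel_left, Nat.mul_mod_right]

lemma phiN_odd_b (b : ℕ → Bool) {j : ℕ} (h : b j = true) :
    phiN n b (2*j+1) = n - 1 - startN b j := by
  have h2 : (2*j+1) % 2 = 1 := by omega
  have h3 : (2*j+1) / 2 = j := by omega
  simp [phiN, h2, h3, h]

lemma phiN_odd_nb (b : ℕ → Bool) {j : ℕ} (h : b j = false) :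
    phiN n b (2*j+1) = n - 2 - j := by
  have h2 : (2*j+1) % 2 = 1 := by omega
  have h3 : (2*j+1) / 2 = j := by omega
  simp [phiN, h2, h3, h]

lemma phiN_lt (hn : 1 ≤ n) (b : ℕ → Bool) (p : ℕ) : phiN n b p < n := by
  unfold phiN; split
  · omega
  · split <;> omega

/-- Whether value with pair-index `k` starts a block. -/
def isSt (n : ℕ) (B : Fin (n-1) → Bool) (k : ℕ) : Prop := k = 0 ∨ bN n B (k-1) = true

instance (B : Fin (n-1) → Bool) (k : ℕ) : Decidable (isSt n B k) := by
  unfold isSt; infer_instance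

/-- first position of value with pair-index k -/
def pos1 (n : ℕ) (B : Fin (n-1) → Bool) (k : ℕ) : ℕ :=
  if isSt n B k then 2*k else 2*k-1

/-- second position of value with pair-index k -/
def pos2 (n : ℕ) (B : Fin (n-1) → Bool) (k : ℕ) : ℕ :=
  if isSt n B k then 2*(eN n B k)+1 else 2*k

lemma pos1_lt_pos2 (B : Fin (n-1) → Bool) (k : ℕ) : pos1 n B k < pos2 n B k := by
  unfold pos1 pos2; split
  · have := eN_le_ge B k; omega
  · rename_i h
    have : k ≠ 0 := fun hk => h (Or.inl hk)
    omega

lemma pos2_lt (B : Fin (n-1) → Bool) {k : ℕ} (hk : k ≤ n-1) (hn : 1 ≤ n) :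
    pos2 n B k < 2*n := by
  unfold pos2; split
  · have := eN_le B hk; omega
  · omega

lemma occ_phiN (B : Fin (n-1) → Bool) {v : ℕ} (hv : v < n) {p : ℕ} (hp : p < 2*n) :
    phiN n (bN n B) p = v ↔ (p = pos1 n B (n-1-v) ∨ p = pos2 n B (n-1-v)) := by
  obtain ⟨k, hk, hvk, hkv⟩ : ∃ k, k ≤ n - 1 ∧ v = n - 1 - k ∧ n - 1 - v = k :=
    ⟨n - 1 - v, by omega, by omega, rfl⟩
  rw [hkv]
  constructor
  · intro hval
    rcases Nat.even_or_odd p with ⟨i, hi⟩ | ⟨i, hi⟩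
    · have hi' : p = 2*i := by omega
      subst hi'
      rw [phiN_even] at hval
      have hik : k = i := by omega
      subst hik
      by_cases hs : isSt n B k
      · left; simp [pos1, hs]
      · right; simp [pos2, hs]
    · subst hi
      have hin : i ≤ n - 1 := by omega
      by_cases hbi : bN n B i = true
      · rw [phiN_odd_b _ hbi] at hval
        have hsl := startN_le (bN n B) i
        have hstk : startN (bN n B) i = k := by omega
        have hs : isSt n B k := by
          have := startN_isStart (bN n B) i
          rw [hstk] at this; exact this
        have hei : eN n B k = i := by
          have h0 := eN_le_ge B k
          have h1 : eN n B k ≤ i := eN_min B (by omega) hbi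
          by_contra hne
          have h2 : eN n B k < i := by omega
          have := startN_no_b (bN n B) i (eN n B k) (by omega) h2
          rw [eN_b B k] at this; simp at this
        right; simp [pos2, hs, hei]
      · have hbi' : bN n B i = false := by simpa using hbi
        rw [phiN_odd_nb _ hbi'] at hval
        have hilt : i < n - 1 := bN_false_lt hbi'
        have hki : k = i + 1 := by omega
        have hs : ¬ isSt n B k := by
          intro hs
          rcases hs with h | h
          · omega
          · rw [hki] at h; simp at h; rw [h] at hbi'; simp at hbi'
        left; simp [pos1, hs]; omega
  · intro hp12
    by_cases hs : isSt n B k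
    · simp [pos1, pos2, hs] at hp12
      rcases hp12 with h | h
      · subst h; rw [phiN_even]; omega
      · subst h
        rw [phiN_odd_b _ (eN_b B k), startN_eN B hs]
        omega
    · simp [pos1, pos2, hs] at hp12
      have hk0 : k ≠ 0 := fun h => hs (Or.inl h)
      rcases hp12 with h | h
      · subst h
        have h1 : 2*k-1 = 2*(k-1)+1 := by omega
        have h2 : bN n B (k-1) = false := by
          rcases Bool.eq_false_or_eq_true (bN n B (k-1)) with h | h
          · exact absurd (Or.inr h) hs
          · exact h
        rw [h1, phiN_odd_nb _ h2]
        omega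
      · subst h; rw [phiN_even]; omega

lemma phiN_odd_ge (b : ℕ → Bool) (j : ℕ) : n - 2 - j ≤ phiN n b (2*j+1) := by
  by_cases hb : b j = true
  · rw [phiN_odd_b b hb]
    have := startN_le b j
    omega
  · rw [phiN_odd_nb b (by simpa using hb)]

lemma phiN_ge_of_lt (b : ℕ → Bool) {p m : ℕ} (h : p < 2*m) :
    n - 1 - m ≤ phiN n b p := by
  rcases Nat.even_or_odd p with ⟨j, hj⟩ | ⟨j, hj⟩
  · have hj' : p = 2*j := by omega
    subst hj'
    rw [phiN_even]
    omega
  · subst hj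
    have := phiN_odd_ge (n := n) b j
    omega

lemma ascent (B : Fin (n-1) → Bool) {p q : ℕ} (hpq : p < q)
    (h : phiN n (bN n B) p < phiN n (bN n B) q) :
    ∃ j, q = 2*j+1 ∧ bN n B j = true := by
  rcases Nat.even_or_odd q with ⟨m, hm⟩ | ⟨j, hj⟩
  · exfalso
    have hm' : q = 2*m := by omega
    subst hm'
    rw [phiN_even] at h
    have := phiN_ge_of_lt (n := n) (bN n B) hpq
    omega
  · subst hj
    refine ⟨j, rfl, ?_⟩
    by_contra hb
    have hb' : bN n B j = false := by simpa using hb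
    rw [phiN_odd_nb _ hb'] at h
    have : n - 1 - j ≤ phiN n (bN n B) p := by
      rcases Nat.lt_or_ge p (2*j) with h' | h'
      · exact phiN_ge_of_lt _ h'
      · have : p = 2*j := by omega
        subst this; rw [phiN_even]
    omega

/-- The explicit permutation as a `Fin` function. -/
def Phi (hn : 1 ≤ n) (B : Fin (n-1) → Bool) : Fin (2*n) → Fin n :=
  fun p => ⟨phiN n (bN n B) p.val, phiN_lt hn _ _⟩

lemma avoids122_Phi (hn : 1 ≤ n) (B : Fin (n-1) → Bool) : Avoids122 (Phi hn B) := by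
  rintro ⟨i, j, k, hij, hjk, h1, h2⟩
  rw [Fin.lt_def] at hij hjk h1
  have h2' : phiN n (bN n B) j.val = phiN n (bN n B) k.val := congrArg Fin.val h2
  obtain ⟨j', hj', hbj'⟩ := ascent B hij h1
  have hjval : phiN n (bN n B) j.val = n - 1 - startN (bN n B) j' := by
    rw [hj', phiN_odd_b _ hbj']
  have hkn : k.val < 2*n := k.isLt
  have hsl := startN_le (bN n B) j'
  have hjn : j' < n := by have := j.isLt; omega
  rcases Nat.even_or_odd k.val with ⟨m, hm⟩ | ⟨m, hm⟩
  · have hm' : k.val = 2*m := by omega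
    rw [hm', phiN_even] at h2'
    rw [hjval] at h2'
    have : j' < m := by omega
    omega
  · have hm' : k.val = 2*m+1 := by omega
    have hj'm : j' < m := by omega
    by_cases hbm : bN n B m = true
    · rw [hm', phiN_odd_b _ hbm, hjval] at h2'
      have h3 : j' + 1 ≤ startN (bN n B) m :=
        (startN_succ_of_b (bN n B) hbj') ▸ startN_mono (bN n B) hj'm
      have h4 := startN_le (bN n B) m
      omega
    · have hbm' : bN n B m = false := by simpa using hbm
      rw [hm', phiN_odd_nb _ hbm', hjval] at h2'
      have := bN_false_lt hbm'
      omega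

lemma avoids123_Phi (hn : 1 ≤ n) (B : Fin (n-1) → Bool) : Avoids123 (Phi hn B) := by
  rintro ⟨i, j, k, hij, hjk, h1, h2⟩
  rw [Fin.lt_def] at hij hjk h1 h2
  obtain ⟨j', hj', hbj'⟩ := ascent B hij h1
  obtain ⟨m, hm, hbm⟩ := ascent B hjk h2
  have hjval : phiN n (bN n B) j.val = n - 1 - startN (bN n B) j' := by
    rw [hj', phiN_odd_b _ hbj']
  have hkval : phiN n (bN n B) k.val = n - 1 - startN (bN n B) m := by
    rw [hm, phiN_odd_b _ hbm]
  have hj'm : j' ≤ m := by omega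
  have h3 := startN_mono (bN n B) hj'm
  have h4 := startN_le (bN n B) j'
  have h5 := startN_le (bN n B) m
  have h2' : phiN n (bN n B) j.val < phiN n (bN n B) k.val := h2
  rw [hjval, hkval] at h2'
  omega

lemma nonCrossing_Phi (hn : 1 ≤ n) (B : Fin (n-1) → Bool) : NonCrossing (Phi hn B) := by
  rintro ⟨i, j, k, l, hij, hjk, hkl, hik, hjl, hne⟩
  rw [Fin.lt_def] at hij hjk hkl
  set b := bN n B
  have hv : (Phi hn B i).val < n := (Phi hn B i).isLt
  have hu : (Phi hn B j).val < n := (Phi hn B j).isLt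
  set v := (Phi hn B i).val with hvdef
  set u := (Phi hn B j).val with hudef
  have hvu : v ≠ u := fun h => hne (Fin.ext h)
  have hiv : phiN n (bN n B) i.val = v := rfl
  have hju : phiN n (bN n B) j.val = u := rfl
  have hkv : phiN n (bN n B) k.val = v := (congrArg Fin.val hik).symm
  have hlu : phiN n (bN n B) l.val = u := (congrArg Fin.val hjl).symm
  have oi := (occ_phiN B hv i.isLt).mp hiv
  have ok := (occ_phiN B hv k.isLt).mp hkv
  have oj := (occ_phiN B hu j.isLt).mp hju
  have ol := (occ_phiN B hu l.isLt).mp hlu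
  have h12v := pos1_lt_pos2 B (n-1-v)
  have h12u := pos1_lt_pos2 B (n-1-u)
  -- i = pos1 v, k = pos2 v, j = pos1 u, l = pos2 u
  have hi1 : i.val = pos1 n B (n-1-v) ∧ k.val = pos2 n B (n-1-v) := by
    rcases oi with h | h <;> rcases ok with h' | h' <;> omega
  have hj1 : j.val = pos1 n B (n-1-u) ∧ l.val = pos2 n B (n-1-u) := by
    rcases oj with h | h <;> rcases ol with h' | h' <;> omega
  obtain ⟨hi1, hk2⟩ := hi1
  obtain ⟨hj1, hl2⟩ := hj1
  rw [hi1, hj1] at hij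
  rw [hj1, hk2] at hjk
  rw [hk2, hl2] at hkl
  by_cases hsv : isSt n B (n-1-v)
  · simp only [pos1, pos2, if_pos hsv] at hij hjk hkl
    by_cases hsu : isSt n B (n-1-u)
    · simp only [pos1, pos2, if_pos hsu] at hij hjk hkl
      have h1 : n-1-u ≤ eN n B (n-1-v) := by omega
      have h2 : eN n B (n-1-u) ≤ eN n B (n-1-v) := eN_min B h1 (eN_b B _)
      omega
    · simp only [pos1, pos2, if_neg hsu] at hij hjk hkl
      omega
  · simp only [pos1, pos2, if_neg hsv] at hij hjk hkl
    have : n-1-v ≠ 0 := fun h => hsv (Or.inl h)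
    omega

lemma isMultisetPerm_Phi (hn : 1 ≤ n) (B : Fin (n-1) → Bool) : IsMultisetPerm (Phi hn B) := by
  intro v
  have hv : v.val < n := v.isLt
  have hk : n - 1 - v.val ≤ n - 1 := by omega
  have hp2 : pos2 n B (n-1-v.val) < 2*n := pos2_lt B hk hn
  have hp1 : pos1 n B (n-1-v.val) < 2*n := lt_trans (pos1_lt_pos2 B _) hp2
  have hltp := pos1_lt_pos2 B (n-1-v.val)
  have hne : (⟨pos1 n B (n-1-v.val), hp1⟩ : Fin (2*n)) ≠ ⟨pos2 n B (n-1-v.val), hp2⟩ := by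
    intro h
    have h' : pos1 n B (n-1-v.val) = pos2 n B (n-1-v.val) := congrArg Fin.val h
    omega
  have : (Finset.univ.filter fun i => Phi hn B i = v) =
      {⟨pos1 n B (n-1-v.val), hp1⟩, ⟨pos2 n B (n-1-v.val), hp2⟩} := by
    ext p
    simp only [Finset.mem_filter, Finset.mem_univ, true_and, Finset.mem_insert,
      Finset.mem_singleton]
    constructor
    · intro h
      have hval : phiN n (bN n B) p.val = v.val := congrArg Fin.val h
      rcases (occ_phiN B hv p.isLt).mp hval with h' | h'
      · left; exact Fin.ext h'
      · right; exact Fin.ext h'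
    · intro h
      rcases h with h | h <;> subst h <;>
        refine Fin.ext ?_ <;> simp only [Phi] <;>
        [exact (occ_phiN B hv hp1).mpr (Or.inl rfl);
         exact (occ_phiN B hv hp2).mpr (Or.inr rfl)]
  rw [this, Finset.card_insert_of_notMem (by simpa using hne), Finset.card_singleton]

/-! ### Part II: structure of a valid permutation -/

section Structure

variable {π : Fin (2*n) → Fin n}

def occ (π : Fin (2*n) → Fin n) (v : Fin n) : Finset (Fin (2*n)) :=
  Finset.univ.filter (fun p => π p = v)

lemma mem_occ {v : Fin n} {p : Fin (2*n)} : p ∈ occ π v ↔ π p = v := by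
  simp [occ]

lemma occ_card (hm : IsMultisetPerm π) (v : Fin n) : (occ π v).card = 2 := hm v

lemma occ_nonempty (hm : IsMultisetPerm π) (v : Fin n) : (occ π v).Nonempty :=
  Finset.card_pos.mp (by rw [occ_card hm]; omega)

def fstP (hm : IsMultisetPerm π) (v : Fin n) : Fin (2*n) :=
  (occ π v).min' (occ_nonempty hm v)

def sndP (hm : IsMultisetPerm π) (v : Fin n) : Fin (2*n) :=
  (occ π v).max' (occ_nonempty hm v)

lemma π_fstP (hm : IsMultisetPerm π) (v : Fin n) : π (fstP hm v) = v :=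
  mem_occ.mp ((occ π v).min'_mem _)

lemma π_sndP (hm : IsMultisetPerm π) (v : Fin n) : π (sndP hm v) = v :=
  mem_occ.mp ((occ π v).max'_mem _)

lemma fstP_lt_sndP (hm : IsMultisetPerm π) (v : Fin n) : fstP hm v < sndP hm v :=
  Finset.min'_lt_max'_of_card _ (by rw [occ_card hm]; omega)

lemma fstP_le (hm : IsMultisetPerm π) {v : Fin n} {p : Fin (2*n)} (h : π p = v) :
    fstP hm v ≤ p := Finset.min'_le _ _ (mem_occ.mpr h)

lemma le_sndP (hm : IsMultisetPerm π) {v : Fin n} {p : Fin (2*n)} (h : π p = v) :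
    p ≤ sndP hm v := Finset.le_max' _ _ (mem_occ.mpr h)

lemma eq_fstP_or_sndP (hm : IsMultisetPerm π) {v : Fin n} {p : Fin (2*n)} (h : π p = v) :
    p = fstP hm v ∨ p = sndP hm v := by
  have hsub : {fstP hm v, sndP hm v} ⊆ occ π v := by
    intro x hx
    rcases Finset.mem_insert.mp hx with h' | h'
    · subst h'; exact mem_occ.mpr (π_fstP hm v)
    · rw [Finset.mem_singleton] at h'; subst h'; exact mem_occ.mpr (π_sndP hm v)
  have hcard : ({fstP hm v, sndP hm v} : Finset (Fin (2*n))).card = 2 := by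
    rw [Finset.card_insert_of_notMem (by simp [(fstP_lt_sndP hm v).ne]),
      Finset.card_singleton]
  have : occ π v = {fstP hm v, sndP hm v} :=
    (Finset.eq_of_subset_of_card_le hsub (by rw [occ_card hm, hcard])).symm
  have hp : p ∈ occ π v := mem_occ.mpr h
  rw [this] at hp
  simpa using hp

/-- From Avoids122: every entry before the first occurrence of `v` is `> v`;
    stated as: occurrences of smaller values are after `fstP v`. -/
lemma L1 (hm : IsMultisetPerm π) (h122 : Avoids122 π) {u v : Fin n} (huv : u < v)
    {p : Fin (2*n)} (hp : π p = u) : fstP hm v < p := by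
  rcases lt_trichotomy p (fstP hm v) with h | h | h
  · exfalso
    exact h122 ⟨p, fstP hm v, sndP hm v, h, fstP_lt_sndP hm v,
      by rw [hp, π_fstP hm v]; exact huv, by rw [π_fstP hm v, π_sndP hm v]⟩
  · exfalso
    have : π p = v := by rw [h, π_fstP hm v]
    rw [hp] at this
    exact absurd this (LT.lt.ne huv)
  · exact h

lemma gt_of_lt_fstP (hm : IsMultisetPerm π) (h122 : Avoids122 π) {v : Fin n}
    {p : Fin (2*n)} (hp : p < fstP hm v) : v < π p := by
  rcases lt_trichotomy (π p) v with h | h | h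
  · exact absurd (L1 hm h122 h rfl) (by omega)
  · exfalso
    have := fstP_le hm h
    omega
  · exact h

/-- Non-crossing dichotomy. -/
lemma L2 (hm : IsMultisetPerm π) (h122 : Avoids122 π) (hnc : NonCrossing π)
    {u v : Fin n} (huv : u < v) : sndP hm v < fstP hm u ∨ sndP hm u < sndP hm v := by
  by_contra hcon
  push_neg at hcon
  obtain ⟨hc1, hc2⟩ := hcon
  have hne1 : fstP hm u ≠ sndP hm v := by
    intro h
    have := π_fstP hm u
    rw [h, π_sndP hm v] at this
    exact absurd this (LT.lt.ne' huv)
  have hne2 : sndP hm v ≠ sndP hm u := by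
    intro h
    have := π_sndP hm v
    rw [h, π_sndP hm u] at this
    exact absurd this (LT.lt.ne huv)
  have h1 : fstP hm u < sndP hm v := lt_of_le_of_ne hc1 hne1
  have h2 : sndP hm v < sndP hm u := lt_of_le_of_ne hc2 hne2
  exact hnc ⟨fstP hm v, fstP hm u, sndP hm v, sndP hm u,
    L1 hm h122 huv (π_fstP hm u), h1, h2,
    by rw [π_fstP hm v, π_sndP hm v],
    by rw [π_fstP hm u, π_sndP hm u],
    by rw [π_fstP hm v, π_fstP hm u]; exact (ne_of_lt huv).symm⟩

/-- An arc nested inside another arc is trivial: nothing strictly inside it. -/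
lemma L3 (hm : IsMultisetPerm π) (h122 : Avoids122 π) (hnc : NonCrossing π)
    (h123 : Avoids123 π) {u v : Fin n} (huv : u < v) (hnest : sndP hm u < sndP hm v)
    {p : Fin (2*n)} (hp1 : fstP hm u < p) (hp2 : p < sndP hm u) : False := by
  have hwu : π p ≠ u := by
    intro h
    rcases eq_fstP_or_sndP hm h with h' | h' <;> omega
  rcases lt_or_gt_of_ne hwu with h | h
  · -- w < u : 123 pattern p < sndP u < sndP v
    exact h123 ⟨p, sndP hm u, sndP hm v, hp2, hnest,
      by rw [π_sndP hm u]; exact h, by rw [π_sndP hm u, π_sndP hm v]; exact huv⟩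
  · -- u < w
    have hfw : fstP hm (π p) < fstP hm u := L1 hm h122 h (π_fstP hm u)
    have hps : p = sndP hm (π p) := by
      rcases eq_fstP_or_sndP hm (rfl : π p = π p) with h' | h'
      · omega
      · exact h'
    rcases L2 hm h122 hnc h with h' | h' <;> omega

/-- `v` is a "top" value: its arc is not nested in any other arc. -/
def TopV (hm : IsMultisetPerm π) (v : Fin n) : Prop :=
  ∀ w, v < w → sndP hm w < fstP hm v

lemma occ_disj {w1 w2 : Fin n} (h : w1 ≠ w2) : Disjoint (occ π w1) (occ π w2) := by
  rw [Finset.disjoint_left]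
  intro p h1 h2
  rw [mem_occ] at h1 h2
  exact h (h1 ▸ h2)

lemma sum_occ_card (hm : IsMultisetPerm π) (s : Finset (Fin n)) :
    ∑ x ∈ s, (occ π x).card = 2 * s.card := by
  rw [Finset.sum_congr rfl (fun x _ => occ_card hm x), Finset.sum_const, smul_eq_mul]
  ring

lemma fstP_top (hm : IsMultisetPerm π) (h122 : Avoids122 π) {v : Fin n}
    (hTop : TopV hm v) : (fstP hm v).val = 2 * (n - 1 - v.val) := by
  have hset : Finset.Iio (fstP hm v) = (Finset.Ioi v).biUnion (fun w => occ π w) := by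
    ext p
    simp only [Finset.mem_Iio, Finset.mem_biUnion, Finset.mem_Ioi]
    constructor
    · intro hp
      exact ⟨π p, gt_of_lt_fstP hm h122 hp, mem_occ.mpr rfl⟩
    · rintro ⟨w, hw, hpw⟩
      have hπ : π p = w := mem_occ.mp hpw
      rcases eq_fstP_or_sndP hm hπ with h | h
      · have := L1 hm h122 hw (π_fstP hm v)
        omega
      · have := hTop w hw
        omega
  have h1 := Fin.card_Iio (fstP hm v)
  rw [hset, Finset.card_biUnion (fun w _ w' _ hne => occ_disj hne),
    sum_occ_card hm, Fin.card_Ioi] at h1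
  omega

lemma container (hm : IsMultisetPerm π) (h122 : Avoids122 π) (hnc : NonCrossing π)
    (h123 : Avoids123 π) {v : Fin n} (hNT : ¬ TopV hm v) :
    ∃ w, v < w ∧ fstP hm w < fstP hm v ∧ fstP hm v < sndP hm w ∧ sndP hm v < sndP hm w ∧
      ∀ w', v < w' → fstP hm v < sndP hm w' → w' = w := by
  unfold TopV at hNT
  push_neg at hNT
  obtain ⟨w, hw, hw2⟩ := hNT
  have hne1 : fstP hm v ≠ sndP hm w := by
    intro h
    have := π_fstP hm v
    rw [h, π_sndP hm w] at this
    exact absurd this (LT.lt.ne' hw)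
  have h1 : fstP hm v < sndP hm w := by omega
  have hfw : fstP hm w < fstP hm v := L1 hm h122 hw (π_fstP hm v)
  have hsv : sndP hm v < sndP hm w := by
    rcases L2 hm h122 hnc hw with h | h
    · omega
    · exact h
  refine ⟨w, hw, hfw, h1, hsv, ?_⟩
  intro w' hw' hcont
  by_contra hne
  have hfw' : fstP hm w' < fstP hm v := L1 hm h122 hw' (π_fstP hm v)
  rcases lt_or_gt_of_ne hne with hlt | hlt
  · rcases L2 hm h122 hnc hlt with h | h
    · omega
    · exact L3 hm h122 hnc h123 hlt h hfw' hcont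
  · rcases L2 hm h122 hnc hlt with h | h
    · omega
    · exact L3 hm h122 hnc h123 hlt h hfw h1

lemma sndP_succ (hm : IsMultisetPerm π) (h122 : Avoids122 π) (hnc : NonCrossing π)
    (h123 : Avoids123 π) {v : Fin n} (hNT : ¬ TopV hm v) :
    (sndP hm v).val = (fstP hm v).val + 1 := by
  obtain ⟨w, hw, _, _, hsv, _⟩ := container hm h122 hnc h123 hNT
  have hlt := fstP_lt_sndP hm v
  by_contra hne
  have hplt : (fstP hm v).val + 1 < 2*n := by omega
  exact L3 hm h122 hnc h123 hw hsv
    (show fstP hm v < ⟨(fstP hm v).val + 1, hplt⟩ by rw [Fin.lt_def]; simp)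
    (show (⟨(fstP hm v).val + 1, hplt⟩ : Fin (2*n)) < sndP hm v by rw [Fin.lt_def]; simp; omega)

lemma fstP_nontop (hm : IsMultisetPerm π) (h122 : Avoids122 π) (hnc : NonCrossing π)
    (h123 : Avoids123 π) {v : Fin n} (hNT : ¬ TopV hm v) :
    (fstP hm v).val + 1 = 2 * (n - 1 - v.val) := by
  obtain ⟨w0, hw0, hfw0, hcont0, hsv0, huniq⟩ := container hm h122 hnc h123 hNT
  have hset : Finset.Iio (fstP hm v) =
      insert (fstP hm w0) (((Finset.Ioi v).erase w0).biUnion (occ π)) := by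
    ext p
    simp only [Finset.mem_Iio, Finset.mem_insert, Finset.mem_biUnion, Finset.mem_erase,
      Finset.mem_Ioi]
    constructor
    · intro hp
      have hgt := gt_of_lt_fstP hm h122 hp
      by_cases hx : π p = w0
      · rcases eq_fstP_or_sndP hm hx with h | h
        · exact Or.inl h
        · omega
      · exact Or.inr ⟨π p, ⟨hx, hgt⟩, mem_occ.mpr rfl⟩
    · rintro (h | ⟨x, ⟨hxw, hxv⟩, hpx⟩)
      · subst h; exact hfw0
      · have hπ := mem_occ.mp hpx
        have hsx : sndP hm x < fstP hm v := by
          by_contra h'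
          have hne2 : sndP hm x ≠ fstP hm v := by
            intro h
            have := π_sndP hm x
            rw [h, π_fstP hm v] at this
            exact absurd this (LT.lt.ne hxv)
          have h'' : fstP hm v < sndP hm x := by omega
          exact hxw (huniq x hxv h'')
        rcases eq_fstP_or_sndP hm hπ with h | h
        · have := L1 hm h122 hxv (π_fstP hm v); omega
        · omega
  have hnotmem : fstP hm w0 ∉ ((Finset.Ioi v).erase w0).biUnion (occ π) := by
    intro hmem
    obtain ⟨x, hx, hpx⟩ := Finset.mem_biUnion.mp hmem
    have hπ := mem_occ.mp hpx
    rw [π_fstP hm w0] at hπ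
    exact (Finset.mem_erase.mp hx).1 hπ.symm
  have h1 := Fin.card_Iio (fstP hm v)
  rw [hset, Finset.card_insert_of_notMem hnotmem,
    Finset.card_biUnion (fun w _ w' _ hne => occ_disj hne),
    sum_occ_card hm, Finset.card_erase_of_mem (Finset.mem_Ioi.mpr hw0),
    Fin.card_Ioi] at h1
  have hvw : v.val < w0.val := hw0
  have hwn : w0.val < n := w0.isLt
  omega

lemma sndP_top_odd (hm : IsMultisetPerm π) (h122 : Avoids122 π) (hnc : NonCrossing π)
    {v : Fin n} (hTop : TopV hm v) : (sndP hm v).val % 2 = 1 := by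
  classical
  set D := Finset.univ.filter (fun x => x ≠ v ∧ fstP hm x < sndP hm v) with hD
  have hset : Finset.Iio (sndP hm v) = insert (fstP hm v) (D.biUnion (occ π)) := by
    ext p
    simp only [Finset.mem_Iio, Finset.mem_insert, Finset.mem_biUnion, hD,
      Finset.mem_filter, Finset.mem_univ, true_and]
    constructor
    · intro hp
      by_cases hx : π p = v
      · rcases eq_fstP_or_sndP hm hx with h | h
        · exact Or.inl h
        · omega
      · refine Or.inr ⟨π p, ⟨hx, ?_⟩, mem_occ.mpr rfl⟩
        have := fstP_le hm (rfl : π p = π p)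
        omega
    · rintro (h | ⟨x, ⟨hxv, hxf⟩, hpx⟩)
      · subst h; exact fstP_lt_sndP hm v
      · have hπ := mem_occ.mp hpx
        have hsx : sndP hm x < sndP hm v := by
          rcases lt_or_gt_of_ne hxv with hlt | hlt
          · rcases L2 hm h122 hnc hlt with h | h
            · omega
            · exact h
          · have := hTop x hlt
            have := fstP_lt_sndP hm v
            omega
        have := le_sndP hm hπ
        omega
  have hnotmem : fstP hm v ∉ D.biUnion (occ π) := by
    intro hmem
    obtain ⟨x, hx, hpx⟩ := Finset.mem_biUnion.mp hmem
    have hπ := mem_occ.mp hpx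
    rw [π_fstP hm v] at hπ
    rw [hD, Finset.mem_filter] at hx
    exact hx.2.1 hπ.symm
  have h1 := Fin.card_Iio (sndP hm v)
  rw [hset, Finset.card_insert_of_notMem hnotmem,
    Finset.card_biUnion (fun w _ w' _ hne => occ_disj hne),
    sum_occ_card hm] at h1
  omega

lemma even_pos (hm : IsMultisetPerm π) (h122 : Avoids122 π) (hnc : NonCrossing π)
    (h123 : Avoids123 π) {i : ℕ} (hp : 2*i < 2*n) :
    (π ⟨2*i, hp⟩).val = n - 1 - i := by
  have hvn : (π ⟨2*i, hp⟩).val < n := (π ⟨2*i, hp⟩).isLt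
  rcases eq_fstP_or_sndP hm (rfl : π ⟨2*i, hp⟩ = π ⟨2*i, hp⟩) with h | h
  · have hval : (2*i : ℕ) = (fstP hm (π ⟨2*i, hp⟩)).val := congrArg Fin.val h
    by_cases hT : TopV hm (π ⟨2*i, hp⟩)
    · have := fstP_top hm h122 hT
      omega
    · have := fstP_nontop hm h122 hnc h123 hT
      omega
  · have hval : (2*i : ℕ) = (sndP hm (π ⟨2*i, hp⟩)).val := congrArg Fin.val h
    by_cases hT : TopV hm (π ⟨2*i, hp⟩)
    · have := sndP_top_odd hm h122 hnc hT
      omega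
    · have h1 := sndP_succ hm h122 hnc h123 hT
      have h2 := fstP_nontop hm h122 hnc h123 hT
      omega

lemma odd_pos (hm : IsMultisetPerm π) (h122 : Avoids122 π) (hnc : NonCrossing π)
    (h123 : Avoids123 π) {j : ℕ} (hp : 2*j+1 < 2*n) :
    (j < n-1 ∧ (π ⟨2*j+1, hp⟩).val = n-2-j ∧ ¬ TopV hm (π ⟨2*j+1, hp⟩)) ∨
    (TopV hm (π ⟨2*j+1, hp⟩) ∧ sndP hm (π ⟨2*j+1, hp⟩) = ⟨2*j+1, hp⟩) := by
  have hvn : (π ⟨2*j+1, hp⟩).val < n := (π ⟨2*j+1, hp⟩).isLt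
  rcases eq_fstP_or_sndP hm (rfl : π ⟨2*j+1, hp⟩ = π ⟨2*j+1, hp⟩) with h | h
  · have hval : (2*j+1 : ℕ) = (fstP hm (π ⟨2*j+1, hp⟩)).val := congrArg Fin.val h
    by_cases hT : TopV hm (π ⟨2*j+1, hp⟩)
    · have := fstP_top hm h122 hT
      omega
    · have := fstP_nontop hm h122 hnc h123 hT
      exact Or.inl ⟨by omega, by omega, hT⟩
  · have hval : (2*j+1 : ℕ) = (sndP hm (π ⟨2*j+1, hp⟩)).val := congrArg Fin.val h
    by_cases hT : TopV hm (π ⟨2*j+1, hp⟩)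
    · exact Or.inr ⟨hT, h.symm⟩
    · have h1 := sndP_succ hm h122 hnc h123 hT
      have h2 := fstP_nontop hm h122 hnc h123 hT
      omega

/-- Decode the boundary bits from a permutation. -/
def dec (π : Fin (2*n) → Fin n) : Fin (n-1) → Bool :=
  fun j => decide ((π ⟨2*j.val+1, by omega⟩).val ≠ n-2-j.val)

lemma bN_dec_eq {j : ℕ} (hj : j < n-1) (h2 : 2*j+1 < 2*n) :
    bN n (dec π) j = decide ((π ⟨2*j+1, h2⟩).val ≠ n-2-j) := by
  simp only [bN, dec, dif_pos hj]

lemma phi_dec (hn : 1 ≤ n) (hm : IsMultisetPerm π) (h122 : Avoids122 π)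
    (hnc : NonCrossing π) (h123 : Avoids123 π) : Phi hn (dec π) = π := by
  funext p
  apply Fin.ext
  show phiN n (bN n (dec π)) p.val = (π p).val
  rcases Nat.even_or_odd p.val with ⟨i, hi⟩ | ⟨j, hj⟩
  · have hi' : p.val = 2*i := by omega
    have h2i : 2*i < 2*n := hi' ▸ p.isLt
    have hpe : p = ⟨2*i, h2i⟩ := Fin.ext hi'
    rw [hpe]
    show phiN n (bN n (dec π)) (2*i) = _
    rw [phiN_even, even_pos hm h122 hnc h123 h2i]
  · have h2j : 2*j+1 < 2*n := hj ▸ p.isLt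
    have hpe : p = ⟨2*j+1, h2j⟩ := Fin.ext hj
    rw [hpe]
    show phiN n (bN n (dec π)) (2*j+1) = _
    rcases odd_pos hm h122 hnc h123 h2j with ⟨hjlt, hval, _⟩ | ⟨hT, hsnd⟩
    · have hb : bN n (dec π) j = false := by
        rw [bN_dec_eq hjlt h2j]
        simp [hval]
      rw [phiN_odd_nb _ hb, hval]
    · have hvn : (π ⟨2*j+1, h2j⟩).val < n := (π ⟨2*j+1, h2j⟩).isLt
      have hfst : (fstP hm (π ⟨2*j+1, h2j⟩)).val = 2*(n-1-(π ⟨2*j+1, h2j⟩).val) :=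
        fstP_top hm h122 hT
      have hfs : (fstP hm (π ⟨2*j+1, h2j⟩)).val < 2*j+1 := by
        have := fstP_lt_sndP hm (π ⟨2*j+1, h2j⟩)
        rw [hsnd] at this
        exact this
      have hkuj : n-1-(π ⟨2*j+1, h2j⟩).val ≤ j := by omega
      have hb : bN n (dec π) j = true := by
        by_cases hjn : j < n-1
        · rw [bN_dec_eq hjn h2j]
          simp only [decide_eq_true_eq]
          intro heq
          omega
        · exact bN_high _ (by omega)
      rw [phiN_odd_b _ hb]
      have h0 : n-1-(π ⟨2*j+1, h2j⟩).val = 0 ∨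
          bN n (dec π) (n-1-(π ⟨2*j+1, h2j⟩).val-1) = true := by
        by_cases hku0 : n-1-(π ⟨2*j+1, h2j⟩).val = 0
        · exact Or.inl hku0
        · right
          have hlt1 : n-1-(π ⟨2*j+1, h2j⟩).val-1 < n-1 := by omega
          have hlt2 : 2*(n-1-(π ⟨2*j+1, h2j⟩).val-1)+1 < 2*n := by omega
          rw [bN_dec_eq hlt1 hlt2]
          simp only [decide_eq_true_eq]
          intro heq
          have heq' : π ⟨2*(n-1-(π ⟨2*j+1, h2j⟩).val-1)+1, hlt2⟩ = π ⟨2*j+1, h2j⟩ := by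
            apply Fin.ext
            rw [heq]
            omega
          rcases eq_fstP_or_sndP hm heq' with h' | h'
          · have h'' : (2*(n-1-(π ⟨2*j+1, h2j⟩).val-1)+1) =
                (fstP hm (π ⟨2*j+1, h2j⟩)).val := congrArg Fin.val h'
            omega
          · rw [hsnd] at h'
            have h'' : (2*(n-1-(π ⟨2*j+1, h2j⟩).val-1)+1) = 2*j+1 := congrArg Fin.val h'
            omega
      have hmid : ∀ m, n-1-(π ⟨2*j+1, h2j⟩).val ≤ m → m < j → bN n (dec π) m = false := by
        intro m hm1 hm2
        have hmlt : m < n-1 := by omega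
        have hm2n : 2*m+1 < 2*n := by omega
        rw [bN_dec_eq hmlt hm2n]
        simp only [decide_eq_false_iff_not, Decidable.not_not]
        rcases odd_pos hm h122 hnc h123 hm2n with ⟨_, hvm, _⟩ | ⟨hTx, hsx⟩
        · exact hvm
        · exfalso
          have hxv : π ⟨2*m+1, hm2n⟩ ≠ π ⟨2*j+1, h2j⟩ := by
            intro h
            rw [h, hsnd] at hsx
            have := congrArg Fin.val hsx
            simp at this
            omega
          rcases lt_or_gt_of_ne hxv with hlt | hlt
          · have h1 := hTx (π ⟨2*j+1, h2j⟩) hlt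
            rw [hsnd] at h1
            have h2 := fstP_lt_sndP hm (π ⟨2*m+1, hm2n⟩)
            rw [hsx] at h2
            have h1' : (2*j+1 : ℕ) < (fstP hm (π ⟨2*m+1, hm2n⟩)).val := h1
            have h2' : (fstP hm (π ⟨2*m+1, hm2n⟩)).val < 2*m+1 := h2
            omega
          · have h1 := hT (π ⟨2*m+1, hm2n⟩) hlt
            rw [hsx] at h1
            have h1' : (2*m+1 : ℕ) < (fstP hm (π ⟨2*j+1, h2j⟩)).val := h1
            omega
      rw [startN_eq _ hkuj h0 hmid]
      omega

lemma dec_phi (hn : 1 ≤ n) (B : Fin (n-1) → Bool) : dec (Phi hn B) = B := by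
  funext j
  have hj : j.val < n-1 := j.isLt
  show decide ((Phi hn B ⟨2*j.val+1, by omega⟩).val ≠ n-2-j.val) = B j
  have hval : (Phi hn B ⟨2*j.val+1, by omega⟩).val = phiN n (bN n B) (2*j.val+1) := rfl
  have hbj : bN n B j.val = B j := by
    simp only [bN, dif_pos hj, Fin.eta]
  cases hB : B j with
  | false =>
    have hb : bN n B j.val = false := by rw [hbj, hB]
    rw [hval, phiN_odd_nb _ hb]
    simp
  | true =>
    have hb : bN n B j.val = true := by rw [hbj, hB]
    rw [hval, phiN_odd_b _ hb]
    have := startN_le (bN n B) j.val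
    simp only [decide_eq_true_eq]
    omega

end Structure

end S16

theorem stmt16 (n : ℕ) (hn : 1 ≤ n) :
    Nat.card {π : Fin (2*n) → Fin n //
      IsMultisetPerm π ∧ NonCrossing π ∧ Avoids122 π ∧ Avoids123 π} =
      2^(n-1) := by
  have e : {π : Fin (2*n) → Fin n //
      IsMultisetPerm π ∧ NonCrossing π ∧ Avoids122 π ∧ Avoids123 π} ≃ (Fin (n-1) → Bool) :=
    { toFun := fun x => S16.dec x.1
      invFun := fun B => ⟨S16.Phi hn B, S16.isMultisetPerm_Phi hn B, S16.nonCrossing_Phi hn B,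
        S16.avoids122_Phi hn B, S16.avoids123_Phi hn B⟩
      left_inv := fun x => Subtype.ext (S16.phi_dec hn x.2.1 x.2.2.2.1 x.2.2.1 x.2.2.2.2)
      right_inv := fun B => S16.dec_phi hn B }
  rw [Nat.card_congr e, Nat.card_eq_fintype_card]
  simp [Fintype.card_fun]
end

section
/- For all n ≥ 1, the number of non-crossing permutations of {1,1,...,n,n} avoiding both the pattern 122 and the pattern 312 equals n. -/
/-- Avoiding 312: no i<j<k with π_j < π_k < π_i. -/
def Avoids312 {n : ℕ} (π : Fin (2*n) → Fin n) : Prop :=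
  ¬ ∃ i j k : Fin (2*n), i < j ∧ j < k ∧ π j < π k ∧ π k < π i

/-!
A valid word starts with its largest letter `n`: a larger letter than `π₀` would occur twice
after it, giving a `122`. Once `π₀ = n`, avoiding `312` forces the other letters to weakly
decrease. Non-crossing forces the letters strictly between the two copies of `n` to come in
pairs, so the second `n` sits at an odd position `2t+1` with `t < n`. A weakly decreasing
arrangement of a fixed multiset around fixed positions of `n` is unique, so the valid words are
exactly the `n` words `stairs t`.
-/

open Finset

section Fibers

variable {α β : Type*} [Fintype α]

theorem card_eq_mul_card_image_of_saturated [DecidableEq β] {f : α → β} {k : ℕ}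
    (hf : ∀ b, #{a | f a = b} = k) {A : Finset α}
    (hA : ∀ a b, f a = f b → a ∈ A → b ∈ A) :
    #A = k * #(A.image f) := by
  rw [card_eq_sum_card_image f A, mul_comm, ← smul_eq_mul, ← sum_const]
  refine sum_congr rfl fun b hb => ?_
  obtain ⟨a, ha, rfl⟩ := mem_image.mp hb
  rw [← hf (f a)]
  congr 1
  ext c
  simp only [mem_filter, mem_univ, true_and, and_iff_right_iff_imp]
  exact fun hc => hA a c hc.symm ha

theorem card_filter_le_apply [LinearOrder β] [Fintype β] (f : α → β) (v : β) :
    #{a | v ≤ f a} = ∑ b with v ≤ b, #{a | f a = b} := by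
  rw [card_eq_sum_card_fiberwise (t := {b | v ≤ b}) fun a ha => by simpa using ha]
  refine sum_congr rfl fun b hb => ?_
  congr 1
  ext a
  simp only [mem_filter, mem_univ, true_and, and_iff_right_iff_imp] at hb ⊢
  rintro rfl
  exact hb

variable [LinearOrder α] [LinearOrder β] [Fintype β] {f g : α → β} {s : Set α}

theorem le_of_antitoneOn_of_card_fiber_eq (hf : AntitoneOn f s) (hg : AntitoneOn g s)
    (hfg : Set.EqOn f g sᶜ) (hcard : ∀ b, #{a | f a = b} = #{a | g a = b}) {a : α}
    (ha : a ∈ s) : f a ≤ g a := by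
  by_contra! hlt
  set Uf : Finset α := {x | f a ≤ f x}
  set Ug : Finset α := {x | f a ≤ g x}
  have hU : #Uf = #Ug := by
    simp only [Uf, Ug, card_filter_le_apply, hcard]
  obtain ⟨b, hbg, hbf⟩ : ∃ b, f a ≤ g b ∧ f b < f a := by
    have hsub : ¬ Ug ⊆ Uf := fun hsub => by
      have haU : a ∈ Ug :=
        eq_of_subset_of_card_le hsub hU.le ▸ mem_filter.mpr ⟨mem_univ a, le_rfl⟩
      exact (mem_filter.mp haU).2.not_gt hlt
    simpa [Uf, Ug, not_subset] using hsub
  have hb : b ∈ s := by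
    by_contra hb
    exact (hbg.trans_lt (hfg hb ▸ hbf)).false
  rcases lt_trichotomy a b with hab | rfl | hba
  · exact ((hg ha hb hab.le).trans_lt hlt |>.trans_le hbg).false
  · exact hbf.false
  · exact ((hf hb ha hba.le).trans_lt hbf).false

theorem eq_of_antitoneOn_of_card_fiber_eq (hf : AntitoneOn f s) (hg : AntitoneOn g s)
    (hfg : Set.EqOn f g sᶜ) (hcard : ∀ b, #{a | f a = b} = #{a | g a = b}) : f = g := by
  funext a
  by_cases ha : a ∈ s
  · exact le_antisymm (le_of_antitoneOn_of_card_fiber_eq hf hg hfg hcard ha)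
      (le_of_antitoneOn_of_card_fiber_eq hg hf hfg.symm (fun b => (hcard b).symm) ha)
  · exact hfg ha

end Fibers

section Shape

variable {n : ℕ} {π : Fin (2*n) → Fin n}

theorem IsMultisetPerm.exists_lt (hM : IsMultisetPerm π) (v : Fin n) :
    ∃ a b, a < b ∧ π a = v ∧ π b = v := by
  obtain ⟨a, ha, b, hb, hab⟩ := one_lt_card.mp (by rw [hM v]; norm_num)
  simp only [mem_filter, mem_univ, true_and] at ha hb
  rcases hab.lt_or_gt with h | h
  exacts [⟨a, b, h, ha, hb⟩, ⟨b, a, h, hb, ha⟩]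

variable [NeZero n]

theorem isTop_apply_zero (hM : IsMultisetPerm π) (h122 : Avoids122 π) : IsTop (π 0) := by
  intro v
  by_contra! hv
  obtain ⟨a, b, hab, ha, hb⟩ := hM.exists_lt v
  have ha0 : 0 < a := Fin.pos_iff_ne_zero.mpr fun h => by rw [← h, ha] at hv; exact hv.false
  exact h122 ⟨0, a, b, ha0, hab, ha ▸ hv, ha.trans hb.symm⟩

theorem exists_isTop_iff (hM : IsMultisetPerm π) (h122 : Avoids122 π) :
    ∃ p, p ≠ 0 ∧ ∀ i, IsTop (π i) ↔ i = 0 ∨ i = p := by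
  have htop := isTop_apply_zero hM h122
  set F : Finset (Fin (2*n)) := {i | π i = π 0}
  obtain ⟨p, hp, hp0⟩ := exists_mem_ne (s := F) (by rw [hM (π 0)]; norm_num) 0
  have hfib : F = {0, p} :=
    (eq_of_subset_of_card_le (insert_subset (by simp [F]) (singleton_subset_iff.mpr hp))
      (by rw [hM (π 0), card_pair hp0.symm])).symm
  refine ⟨p, hp0, fun i => ?_⟩
  have : IsTop (π i) ↔ π i = π 0 := ⟨fun h => le_antisymm (htop _) (h _), fun h => h ▸ htop⟩
  rw [this]
  simpa [F] using congrArg (i ∈ ·) hfib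

theorem antitoneOn_of_avoids312 (h312 : Avoids312 π) (htop : IsTop (π 0)) :
    AntitoneOn π {i | ¬IsTop (π i)} := by
  intro i hi j hj hij
  by_contra! hlt
  have hi0 : 0 < i := Fin.pos_iff_ne_zero.mpr fun h => hi (h ▸ htop)
  exact h312 ⟨0, i, j, hi0, lt_of_le_of_ne hij (by rintro rfl; exact hlt.false),
    hlt, htop.lt_of_ne fun h => hj (h ▸ htop)⟩

theorem odd_of_isTop_iff (hM : IsMultisetPerm π) (hNC : NonCrossing π) {p : Fin (2*n)}
    (hp0 : p ≠ 0) (hp : ∀ i, IsTop (π i) ↔ i = 0 ∨ i = p) : Odd (p : ℕ) := by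
  have htop0 : IsTop (π 0) := (hp 0).mpr (Or.inl rfl)
  have htopp : IsTop (π p) := (hp p).mpr (Or.inr rfl)
  -- a pair of equal letters straddling position `p` would cross the pair of `n`s at `0` and `p`
  have hsat : ∀ i j, π i = π j → i ∈ Ioo 0 p → j ∈ Ioo 0 p := by
    intro i j hij hi
    rw [mem_Ioo] at hi ⊢
    have hi_top : ¬IsTop (π i) := by
      rw [hp]; rintro (rfl | rfl) <;> simp at hi
    have hj : j ≠ 0 ∧ j ≠ p := by
      rw [hij, hp] at hi_top; exact not_or.mp hi_top
    refine ⟨Fin.pos_iff_ne_zero.mpr hj.1, lt_of_not_ge fun hpj => hNC ⟨0, i, p, j, hi.1, hi.2,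
      lt_of_le_of_ne hpj hj.2.symm, le_antisymm (htopp _) (htop0 _), hij,
      fun h => hi_top (h ▸ htop0)⟩⟩
  have hcard := card_eq_mul_card_image_of_saturated hM hsat
  rw [Fin.card_Ioo] at hcard
  have := Fin.val_ne_of_ne hp0
  simp only [Fin.coe_ofNat_eq_mod, Nat.zero_mod] at hcard this
  exact ⟨#((Ioo 0 p).image π), by omega⟩

end Shape

section Stairs

variable {n : ℕ}

theorem Fin.isTop_iff_val_eq (x : Fin n) : IsTop x ↔ (x : ℕ) = n - 1 := by
  have := x.isLt
  refine ⟨fun h => ?_, fun h y => Fin.le_def.mpr (by have := y.isLt; omega)⟩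
  have : n - 1 ≤ (x : ℕ) := h ⟨n - 1, by omega⟩
  omega

/-- `stairs t` is the word `n (n-1)(n-1) ⋯ (n-t)(n-t) n (n-t-1)(n-t-1) ⋯ 1 1`, with its second
`n` at position `2t+1`; `stairsDepth t i` is `n` minus its `i`-th letter. -/
def stairsDepth (t i : ℕ) : ℕ :=
  if i = 2*t+1 then 0 else if i < 2*t+1 then (i+1)/2 else i/2

def stairs (t : Fin n) (i : Fin (2*n)) : Fin n :=
  ⟨n - 1 - stairsDepth t i, by have := t.isLt; omega⟩

variable (t : Fin n)

theorem stairs_isTop_iff (i : Fin (2*n)) :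
    IsTop (stairs t i) ↔ (i : ℕ) = 0 ∨ (i : ℕ) = 2*t+1 := by
  have := t.isLt
  have := i.isLt
  rw [Fin.isTop_iff_val_eq]
  simp only [stairs, stairsDepth]
  split_ifs <;> omega

theorem antitoneOn_stairs : AntitoneOn (stairs t) {i | ¬IsTop (stairs t i)} := by
  intro i hi j hj hij
  simp only [Set.mem_ofPred_eq, stairs_isTop_iff] at hi hj
  have := t.isLt
  simp only [stairs, stairsDepth, Fin.le_def] at hij ⊢
  split_ifs <;> omega

theorem isMultisetPerm_stairs : IsMultisetPerm (stairs t) := by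
  intro v
  have := t.isLt; have := v.isLt
  set d := n - 1 - v with hd
  rw [card_eq_two]
  refine ⟨⟨if d = 0 then 0 else if d ≤ t then 2*d - 1 else 2*d, by split_ifs <;> omega⟩,
    ⟨if d = 0 then 2*t + 1 else if d ≤ t then 2*d else 2*d + 1, by split_ifs <;> omega⟩,
    by rw [ne_eq, Fin.mk.injEq]; split_ifs <;> grind, ?_⟩
  ext i
  have := i.isLt
  simp only [stairs, stairsDepth, mem_filter, mem_univ, true_and, mem_insert, mem_singleton,
    Fin.ext_iff]
  split_ifs <;> omega

theorem avoids122_stairs : Avoids122 (stairs t) := by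
  rintro ⟨i, j, k, hij, hjk, hlt, heq⟩
  have := t.isLt; have := k.isLt
  simp only [stairs, stairsDepth, Fin.lt_def, Fin.ext_iff] at hij hjk hlt heq
  split_ifs at hlt heq <;> omega

theorem avoids312_stairs : Avoids312 (stairs t) := by
  rintro ⟨i, j, k, hij, hjk, hlt, hlt'⟩
  have := t.isLt; have := k.isLt
  simp only [stairs, stairsDepth, Fin.lt_def] at hij hjk hlt hlt'
  split_ifs at hlt hlt' <;> omega

theorem nonCrossing_stairs : NonCrossing (stairs t) := by
  rintro ⟨i, j, k, l, hij, hjk, hkl, hik, hjl, hne⟩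
  have := t.isLt; have := l.isLt
  simp only [stairs, stairsDepth, Fin.lt_def, Fin.ext_iff] at hij hjk hkl hik hjl hne
  split_ifs at hik hjl hne <;> omega

theorem stairs_injective : Function.Injective (stairs (n := n)) := by
  intro s t hst
  have hs : IsTop (stairs s ⟨2*s+1, by omega⟩) := (stairs_isTop_iff s _).mpr (Or.inr rfl)
  rw [hst, stairs_isTop_iff] at hs
  exact Fin.ext (by simp at hs; omega)

end Stairs

theorem exists_stairs_eq {n : ℕ} [NeZero n] {π : Fin (2*n) → Fin n} (hM : IsMultisetPerm π)
    (hNC : NonCrossing π) (h122 : Avoids122 π) (h312 : Avoids312 π) : ∃ t, stairs t = π := by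
  obtain ⟨p, hp0, hp⟩ := exists_isTop_iff hM h122
  obtain ⟨t, ht⟩ := odd_of_isTop_iff hM hNC hp0 hp
  have htn : t < n := by have := p.isLt; omega
  have htop : ∀ i, IsTop (stairs ⟨t, htn⟩ i) ↔ IsTop (π i) := fun i => by
    rw [stairs_isTop_iff, hp, Fin.ext_iff, Fin.ext_iff, ht, Fin.coe_ofNat_eq_mod, Nat.zero_mod]
  refine ⟨⟨t, htn⟩, eq_of_antitoneOn_of_card_fiber_eq (s := {i | ¬IsTop (π i)}) ?_
    (antitoneOn_of_avoids312 h312 (isTop_apply_zero hM h122)) ?_ ?_⟩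
  · simpa only [htop] using antitoneOn_stairs ⟨t, htn⟩
  · intro i hi
    rw [Set.mem_compl_iff, Set.mem_ofPred_eq, not_not] at hi
    exact le_antisymm (hi _) ((htop i).mpr hi _)
  · intro v
    rw [isMultisetPerm_stairs _ v, hM v]

theorem stmt17 (n : ℕ) (hn : 1 ≤ n) :
    Nat.card {π : Fin (2*n) → Fin n //
      IsMultisetPerm π ∧ NonCrossing π ∧ Avoids122 π ∧ Avoids312 π} = n := by
  have : NeZero n := ⟨by omega⟩
  let F (t : Fin n) : {π : Fin (2*n) → Fin n //
      IsMultisetPerm π ∧ NonCrossing π ∧ Avoids122 π ∧ Avoids312 π} :=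
    ⟨stairs t, isMultisetPerm_stairs t, nonCrossing_stairs t, avoids122_stairs t,
      avoids312_stairs t⟩
  have hF : Function.Bijective F := by
    refine ⟨fun s t hst => stairs_injective (congrArg Subtype.val hst), ?_⟩
    rintro ⟨π, hM, hNC, h122, h312⟩
    obtain ⟨t, ht⟩ := exists_stairs_eq hM hNC h122 h312
    exact ⟨t, Subtype.ext ht⟩
  rw [← Nat.card_eq_of_bijective F hF, Nat.card_fin]
end

section
/- For all n ≥ 3, there are no non-crossing permutations of {1,1,...,n,n} avoiding both the pattern 122 and the pattern 321; i.e., every non-crossing permutation of {1,1,...,n,n} with n ≥ 3 that avoids 122 contains a 321 pattern. -/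
lemma occ_pair {n : ℕ} (π : Fin (2*n) → Fin n) (hperm : IsMultisetPerm π) (v : Fin n) :
    ∃ p q : Fin (2*n), p < q ∧ π p = v ∧ π q = v ∧ ∀ i, π i = v → i = p ∨ i = q := by
  have h := hperm v
  rw [Finset.card_eq_two] at h
  obtain ⟨a, b, hab, hs⟩ := h
  have ha : π a = v := by
    have : a ∈ (Finset.univ.filter fun i => π i = v) := by rw [hs]; simp
    simpa using this
  have hb : π b = v := by
    have : b ∈ (Finset.univ.filter fun i => π i = v) := by rw [hs]; simp
    simpa using this
  have hmem : ∀ i, π i = v → i = a ∨ i = b := by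
    intro i hi
    have : i ∈ (Finset.univ.filter fun i => π i = v) := by simp [hi]
    rw [hs] at this; simpa using this
  rcases lt_or_gt_of_ne hab with h | h
  · exact ⟨a, b, h, ha, hb, hmem⟩
  · exact ⟨b, a, h, hb, ha, fun i hi => (hmem i hi).symm⟩

theorem stmt18 (n : ℕ) (hn : 3 ≤ n) (π : Fin (2*n) → Fin n)
    (hperm : IsMultisetPerm π) (hnc : NonCrossing π) (h122 : Avoids122 π) :
    ∃ i j k : Fin (2*n), i < j ∧ j < k ∧ π k < π j ∧ π j < π i := by
  have hn0 : 0 < 2*n := by omega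
  set z : Fin (2*n) := ⟨0, hn0⟩ with hz
  set vtop : Fin n := ⟨n-1, by omega⟩ with hvtop
  set v0 : Fin n := ⟨0, by omega⟩ with hv0
  set v1 : Fin n := ⟨1, by omega⟩ with hv1
  -- π 0 = n-1
  obtain ⟨p, q, hpq, hp, hq, hu⟩ := occ_pair π hperm vtop
  have hz0 : π z = vtop := by
    by_contra hne
    have hzp : z ≠ p := fun h => hne (h ▸ hp)
    have hzq : z ≠ q := fun h => hne (h ▸ hq)
    have hzp' : z < p := by
      rcases lt_or_ge z p with h | h
      · exact h
      · exact absurd (le_antisymm h (Fin.le_def.mpr (Nat.zero_le _))) hzp.symm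
    exact h122 ⟨z, p, q, hzp', hpq, by
      rw [hp]
      exact lt_of_le_of_ne (Fin.le_def.mpr (by have := (π z).2; simp [hvtop]; omega)) hne, hp.trans hq.symm⟩
  -- occurrences of 1 and 0
  obtain ⟨p1, q1, hpq1, hp1, hq1, _⟩ := occ_pair π hperm v1
  obtain ⟨a, b, hab, ha, hb, _⟩ := occ_pair π hperm v0
  have h01 : v0 < v1 := Fin.lt_def.mpr (by simp [hv0, hv1])
  have h1top : v1 < vtop := Fin.lt_def.mpr (by simp [hv1, hvtop]; omega)
  have hap1 : p1 < a := by
    rcases lt_trichotomy a p1 with h | h | h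
    · exact absurd ⟨a, p1, q1, h, hpq1, by rw [ha, hp1]; exact h01, hp1.trans hq1.symm⟩ h122
    · exact absurd (h ▸ ha) (by rw [hp1]; exact fun hh => absurd hh.symm (ne_of_lt h01))
    · exact h
  have hzp1 : z < p1 := by
    rcases lt_or_ge z p1 with h | h
    · exact h
    · have : z = p1 := le_antisymm (Fin.le_def.mpr (Nat.zero_le _)) h
      rw [← this, hz0] at hp1
      exact absurd hp1.symm (ne_of_lt h1top)
  exact ⟨z, p1, a, hzp1, hap1, by rw [ha, hp1]; exact h01, by rw [hp1, hz0]; exact h1top⟩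
end

section
/- Every non-crossing permutation of {1,1,...,n,n} (n ≥ 1) that avoids the pattern 122 also avoids the pattern 132; concretely, a non-crossing 122-avoiding permutation contains no indices i<j<k with π_i < π_k < π_j. -/
theorem stmt19 (n : ℕ) (hn : 1 ≤ n) (π : Fin (2*n) → Fin n)
    (hperm : IsMultisetPerm π) (hnc : NonCrossing π) (h122 : Avoids122 π) :
    ¬ ∃ i j k : Fin (2*n), i < j ∧ j < k ∧ π i < π k ∧ π k < π j := by
  rintro ⟨i, j, k, hij, hjk, h1, h2⟩
  have twin : ∀ x : Fin (2*n), ∃ y : Fin (2*n), y ≠ x ∧ π y = π x := by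
    intro x
    by_contra h
    push_neg at h
    have hc := hperm (π x)
    have : (Finset.univ.filter fun z => π z = π x) = {x} := by
      ext z
      simp only [Finset.mem_filter, Finset.mem_univ, true_and, Finset.mem_singleton]
      constructor
      · intro hz
        by_contra hne
        exact h z hne hz
      · intro hz; subst hz; rfl
    rw [this] at hc
    simp at hc
  obtain ⟨j2, hj2ne, hj2⟩ := twin j
  obtain ⟨k2, hk2ne, hk2⟩ := twin k
  have hkj : π k ≠ π j := ne_of_lt h2
  have hik : π i ≠ π k := ne_of_lt h1
  have hij' : π i ≠ π j := ne_of_lt (lt_trans h1 h2)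
  rcases lt_or_gt_of_ne hj2ne with hj2lt | hj2gt
  · -- j2 < j
    rcases lt_or_gt_of_ne hk2ne with hk2lt | hk2gt
    · -- k2 < k
      rcases lt_trichotomy i k2 with hik2 | hik2 | hik2
      · exact h122 ⟨i, k2, k, hik2, hk2lt, by rw [hk2]; exact h1, hk2⟩
      · exact hik (by rw [hik2]; exact hk2)
      · -- k2 < i
        rcases lt_trichotomy i j2 with hij2 | hij2 | hij2
        · exact h122 ⟨i, j2, j, hij2, hj2lt, by rw [hj2]; exact lt_trans h1 h2, hj2⟩
        · exact hij' (by rw [hij2]; exact hj2)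
        · -- j2 < i
          rcases lt_trichotomy j2 k2 with hjk2 | hjk2 | hjk2
          · exact hnc ⟨j2, k2, j, k, hjk2, lt_trans hik2 hij, hjk,
              hj2, hk2, by rw [hj2, hk2]; exact (ne_of_lt h2).symm⟩
          · exact hkj (by rw [← hj2, ← hk2, hjk2])
          · exact h122 ⟨k2, j2, j, hjk2, hj2lt, by rw [hk2, hj2]; exact h2, hj2⟩
    · -- k < k2
      exact h122 ⟨i, k, k2, lt_trans hij hjk, hk2gt, h1, hk2.symm⟩
  · -- j < j2
    exact h122 ⟨i, j, j2, hij, hj2gt, lt_trans h1 h2, hj2.symm⟩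
end
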